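/- arXiv:1802.06098 — 6 statements merged into one kernel-verified Lean document; each statement's English description precedes it below -/
import Mathlib

section
/- Let (X,r) be a finite colored space with |X| ≥ 5. Then a_2(r) ≤ a_3(r). -/
/-- The set of colors of the colored space `(X, r)`: values `r x y` for distinct `x, y`. -/
def colorIm {X C : Type*} (r : X → X → C) : Set C :=
  {α | ∃ x y : X, x ≠ y ∧ r x y = α}

/-- `a₂(r)`: the number of colors. -/
noncomputable def a2 {X C : Type*} (r : X → X → C) : ℕ := (colorIm r).ncard

/-- `A₃(r)`: the set of multisets of colors of triangles on 3-subsets of `X`. -/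
def A3 {X C : Type*} (r : X → X → C) : Set (Multiset C) :=
  {m | ∃ x y z : X, x ≠ y ∧ y ≠ z ∧ x ≠ z ∧ m = {r x y, r y z, r x z}}

/-- `a₃(r)`: the number of isometry classes of 3-subsets. -/
noncomputable def a3 {X C : Type*} (r : X → X → C) : ℕ := (A3 r).ncard

/-- `M_k(r)`: colors `α` such that the graph `(X, E_α)` has a vertex of degree at least `k`. -/
def Mdeg {X C : Type*} (r : X → X → C) (k : ℕ) : Set C :=
  {α | ∃ x : X, k ≤ {y | y ≠ x ∧ r x y = α}.ncard}

/-- A nonempty set `Γ` of colors is closed if `α, β ∈ Γ` and `αβγ ∈ A₃(r)` imply `γ ∈ Γ`. -/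
def IsClosedColors {X C : Type*} (r : X → X → C) (Γ : Set C) : Prop :=
  ∀ α β γ : C, α ∈ Γ → β ∈ Γ → ({α, β, γ} : Multiset C) ∈ A3 r → γ ∈ Γ

/-- The union of the color classes `E_α`, `α ∈ S`, is a matching (max degree ≤ 1). -/
def IsMatchingOn {X C : Type*} (r : X → X → C) (S : Set C) : Prop :=
  ∀ x y z : X, y ≠ x → z ≠ x → r x y ∈ S → r x z ∈ S → y = z

/-- `r₁` is a fusion of `r`: the color partition of `r` refines that of `r₁`. -/
def IsFusion {X C D : Type*} (r : X → X → C) (r₁ : X → X → D) : Prop :=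
  ∀ x y u v : X, x ≠ y → u ≠ v → r x y = r u v → r₁ x y = r₁ u v

/-- The connected component of `x₀` in the graph on `X` whose edges are the pairs
colored by an element of `S`. -/
def compOf {X C : Type*} (r : X → X → C) (S : Set C) (x₀ : X) : Set X :=
  {y | Relation.ReflTransGen (fun a b => a ≠ b ∧ r a b ∈ S) x₀ y}

/-- `A₃` of the subspace induced on `W ⊆ X`. -/
def A3on {X C : Type*} (r : X → X → C) (W : Set X) : Set (Multiset C) :=
  {m | ∃ x ∈ W, ∃ y ∈ W, ∃ z ∈ W, x ≠ y ∧ y ≠ z ∧ x ≠ z ∧ m = {r x y, r y z, r x z}}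

private theorem colorSum_eq_zero {X : Type*} {C : Type*} [Fintype X] (r : X → X → C)
    (hsym : ∀ x y, r x y = r y x) (hX : 5 ≤ Fintype.card X) (c : C → ℚ)
    (htri : ∀ x y z : X, x ≠ y → y ≠ z → x ≠ z →
      c (r x y) + c (r y z) + c (r x z) = 0) :
    ∀ x y : X, x ≠ y → c (r x y) = 0 := by
  classical
  set n := Fintype.card X with hn
  have hn5 : (5:ℚ) ≤ (n:ℚ) := by exact_mod_cast hX
  set d : X → ℚ := fun a => ∑ b ∈ Finset.univ.erase a, c (r a b) with hd
  set σ : ℚ := ∑ a, d a with hσdef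
  have star : ∀ x y : X, x ≠ y → ((n:ℚ) - 4) * c (r x y) + d x + d y = 0 := by
    intro x y hxy
    have hyex : y ∈ Finset.univ.erase x := Finset.mem_erase.2 ⟨Ne.symm hxy, Finset.mem_univ y⟩
    have hxey : x ∈ Finset.univ.erase y := Finset.mem_erase.2 ⟨hxy, Finset.mem_univ x⟩
    set s : Finset X := (Finset.univ.erase x).erase y with hs
    have hcards : (s.card : ℚ) = (n:ℚ) - 2 := by
      have h1 : s.card = n - 2 := by
        rw [hs, Finset.card_erase_of_mem hyex, Finset.card_erase_of_mem (Finset.mem_univ x),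
          Finset.card_univ, ← hn]
        omega
      rw [h1, Nat.cast_sub (by omega : 2 ≤ n)]
      norm_num
    have hzero : ∑ z ∈ s, (c (r x y) + c (r y z) + c (r x z)) = 0 := by
      apply Finset.sum_eq_zero
      intro z hz
      have hz1 : z ≠ y := (Finset.mem_erase.1 hz).1
      have hz2 : z ≠ x := (Finset.mem_erase.1 (Finset.mem_erase.1 hz).2).1
      exact htri x y z hxy (Ne.symm hz1) (Ne.symm hz2)
    have hsum1 : ∑ z ∈ s, c (r x z) = d x - c (r x y) := by
      rw [hs, Finset.sum_erase_eq_sub hyex, hd]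
    have hsum2 : ∑ z ∈ s, c (r y z) = d y - c (r x y) := by
      have hswap : s = (Finset.univ.erase y).erase x := by rw [hs, Finset.erase_right_comm]
      rw [hswap, Finset.sum_erase_eq_sub hxey, hd]
      simp [hsym y x]
    rw [Finset.sum_add_distrib, Finset.sum_add_distrib, Finset.sum_const, hsum1, hsum2,
      nsmul_eq_mul, hcards] at hzero
    linarith
  have step2 : ∀ x : X, (2*(n:ℚ) - 6) * d x + σ = 0 := by
    intro x
    have h0 : ∑ y ∈ Finset.univ.erase x, (((n:ℚ) - 4) * c (r x y) + d x + d y) = 0 :=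
      Finset.sum_eq_zero (fun y hy => star x y (Ne.symm (Finset.mem_erase.1 hy).1))
    have hsy : ∑ y ∈ Finset.univ.erase x, d y = σ - d x := by
      rw [hσdef, Finset.sum_erase_eq_sub (Finset.mem_univ x)]
    have hcard : (((Finset.univ.erase x).card : ℕ) : ℚ) = (n:ℚ) - 1 := by
      rw [Finset.card_erase_of_mem (Finset.mem_univ x), Finset.card_univ, ← hn,
        Nat.cast_sub (by omega : 1 ≤ n)]
      norm_num
    rw [Finset.sum_add_distrib, Finset.sum_add_distrib, ← Finset.mul_sum, Finset.sum_const,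
      nsmul_eq_mul, hcard, hsy] at h0
    have hdx : ∑ y ∈ Finset.univ.erase x, c (r x y) = d x := by rw [hd]
    rw [hdx] at h0
    linarith
  have hσ0 : σ = 0 := by
    have h0 : ∑ x, ((2*(n:ℚ) - 6) * d x + σ) = 0 :=
      Finset.sum_eq_zero (fun x _ => step2 x)
    rw [Finset.sum_add_distrib, ← Finset.mul_sum, ← hσdef, Finset.sum_const,
      Finset.card_univ, ← hn, nsmul_eq_mul] at h0
    have h3 : (3*(n:ℚ) - 6) * σ = 0 := by linarith
    have hne : (3*(n:ℚ) - 6) ≠ 0 := by intro h; linarith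
    exact (mul_eq_zero.1 h3).resolve_left hne
  have hd0 : ∀ x, d x = 0 := by
    intro x
    have h := step2 x
    rw [hσ0, add_zero] at h
    have hne : (2*(n:ℚ) - 6) ≠ 0 := by linarith
    exact (mul_eq_zero.1 h).resolve_left hne
  intro x y hxy
  have h := star x y hxy
  rw [hd0 x, hd0 y, add_zero, add_zero] at h
  have hne : ((n:ℚ) - 4) ≠ 0 := by linarith
  exact (mul_eq_zero.1 h).resolve_left hne

/-- if `|X| ≥ 5` then `a₂(r) ≤ a₃(r)`. -/
theorem a2_le_a3_of_five_le_card {X C : Type*} [Fintype X] (r : X → X → C)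
    (hsym : ∀ x y, r x y = r y x) (hX : 5 ≤ Fintype.card X) :
    a2 r ≤ a3 r := by
  classical
  have hfin2 : (colorIm r).Finite := by
    apply Set.Finite.subset (Set.finite_range (fun p : X × X => r p.1 p.2))
    rintro α ⟨x, y, -, h⟩
    exact ⟨(x, y), h⟩
  have hfin3 : (A3 r).Finite := by
    apply Set.Finite.subset (Set.finite_range
      (fun p : X × X × X => ({r p.1 p.2.1, r p.2.1 p.2.2, r p.1 p.2.2} : Multiset C)))
    rintro m ⟨x, y, z, -, -, -, h⟩
    exact ⟨(x, y, z), h.symm⟩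
  set K : Finset C := hfin2.toFinset with hK
  set T : Finset (Multiset C) := hfin3.toFinset with hT
  have li : LinearIndependent ℚ
      (fun (α : ↥K) (m : ↥T) => (((m : Multiset C).count (α : C) : ℕ) : ℚ)) := by
    rw [Fintype.linearIndependent_iff]
    intro g hg i
    set cf : C → ℚ := fun γ => if h : γ ∈ K then g ⟨γ, h⟩ else 0 with hcf
    have hgj : ∀ j : ↥K, g j = cf (j : C) := by
      intro j
      simp [hcf, dif_pos j.2]
    have hsumpick : ∀ a : C, a ∈ colorIm r →
        (∑ j : ↥K, g j * (if ((j : C) = a) then (1:ℚ) else 0)) = cf a := by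
      intro a ha
      have h1 : ∑ j : ↥K, g j * (if ((j : C) = a) then (1:ℚ) else 0)
          = ∑ γ ∈ K, (if γ = a then cf γ else 0) := by
        rw [← Finset.sum_coe_sort K (fun γ => if γ = a then cf γ else 0)]
        apply Finset.sum_congr rfl
        intro j _
        rw [hgj j]
        by_cases h : (j : C) = a <;> simp [h]
      rw [h1, Finset.sum_ite_eq' K a cf, if_pos (hfin2.mem_toFinset.2 ha)]
    have hrel : ∀ x y z : X, x ≠ y → y ≠ z → x ≠ z →
        cf (r x y) + cf (r y z) + cf (r x z) = 0 := by
      intro x y z h1 h2 h3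
      have hm : ({r x y, r y z, r x z} : Multiset C) ∈ A3 r := ⟨x, y, z, h1, h2, h3, rfl⟩
      have hmT : ({r x y, r y z, r x z} : Multiset C) ∈ T := hfin3.mem_toFinset.2 hm
      have hq := congrFun hg (⟨_, hmT⟩ : ↥T)
      simp only [Finset.sum_apply, Pi.smul_apply, Pi.zero_apply, smul_eq_mul] at hq
      have hcount : ∀ j : ↥K, ((({r x y, r y z, r x z} : Multiset C).count (j : C) : ℕ) : ℚ)
          = (if ((j : C) = r x y) then (1:ℚ) else 0) + (if ((j : C) = r y z) then 1 else 0)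
            + (if ((j : C) = r x z) then 1 else 0) := by
        intro j
        rw [show ({r x y, r y z, r x z} : Multiset C) = r x y ::ₘ r y z ::ₘ {r x z} by rfl]
        rw [Multiset.count_cons, Multiset.count_cons, Multiset.count_singleton]
        push_cast
        split_ifs <;> ring
      calc cf (r x y) + cf (r y z) + cf (r x z)
          = ∑ j : ↥K, g j * ((({r x y, r y z, r x z} : Multiset C).count (j : C) : ℕ) : ℚ) := by
            rw [Finset.sum_congr rfl (fun j _ => by rw [hcount j])]
            simp only [mul_add, Finset.sum_add_distrib]
            rw [hsumpick _ ⟨x, y, h1, rfl⟩, hsumpick _ ⟨y, z, h2, rfl⟩,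
              hsumpick _ ⟨x, z, h3, rfl⟩]
        _ = 0 := by simpa using hq
    have hzero := colorSum_eq_zero r hsym hX cf hrel
    obtain ⟨x, y, hxy, hrxy⟩ := hfin2.mem_toFinset.1 i.2
    rw [hgj i, ← hrxy]
    exact hzero x y hxy
  have hcard : K.card ≤ T.card := by
    have h1 := li.fintype_card_le_finrank
    rw [Module.finrank_pi ℚ] at h1
    simpa [Fintype.card_coe] using h1
  rw [a2, a3, Set.ncard_eq_toFinset_card _ hfin2, Set.ncard_eq_toFinset_card _ hfin3]
  exact hcard
end

section
/- Let (X,r) be a finite colored space. If a_2(r) = a_3(r) = m_2(r), then a_2(r) ≤ 2. -/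
lemma tri_swap12 {C : Type*} (a b c : C) : ({a,b,c} : Multiset C) = {b,a,c} := by
  simp only [Multiset.insert_eq_cons]; exact Multiset.cons_swap a b {c}

lemma tri_swap23 {C : Type*} (a b c : C) : ({a,b,c} : Multiset C) = {a,c,b} := by
  simp only [Multiset.insert_eq_cons]
  exact congrArg _ (Multiset.cons_swap b c 0)

lemma ms_pair_eq {C : Type*} {a c b d : C} (h : ({a,a,c} : Multiset C) = {b,b,d}) :
    a = b ∧ c = d := by
  classical
  have hab : a = b := by
    by_contra hne
    have hcnt := congrArg (Multiset.count a) h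
    simp only [Multiset.insert_eq_cons, Multiset.count_cons, Multiset.count_singleton] at hcnt
    simp [hne] at hcnt
    split_ifs at hcnt <;> omega
  subst hab
  rw [Multiset.insert_eq_cons, Multiset.insert_eq_cons, Multiset.insert_eq_cons,
    Multiset.insert_eq_cons, Multiset.cons_inj_right, Multiset.cons_inj_right,
    Multiset.singleton_inj] at h
  exact ⟨rfl, h⟩

set_option maxHeartbeats 2000000 in
/-- if `a₂(r) = a₃(r) = m₂(r)` then `a₂(r) ≤ 2`. -/
theorem a2_le_two_of_eq_m2 {X C : Type*} [Fintype X] (r : X → X → C)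
    (hsym : ∀ x y, r x y = r y x)
    (h23 : a2 r = a3 r) (h3m : a3 r = (Mdeg r 2).ncard) :
    a2 r ≤ 2 := by
  classical
  by_contra hlt
  push_neg at hlt
  -- finiteness
  have hSfin : (colorIm r).Finite := by
    apply (Set.finite_range (fun p : X × X => r p.1 p.2)).subset
    rintro c ⟨x, y, -, h⟩; exact ⟨(x, y), h⟩
  have hAfin : (A3 r).Finite := by
    apply (Set.finite_range
      (fun p : X × X × X => ({r p.1 p.2.1, r p.2.1 p.2.2, r p.1 p.2.2} : Multiset C))).subset
    rintro m ⟨x, y, z, -, -, -, h⟩; exact ⟨(x, y, z), h.symm⟩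
  -- three distinct colors
  have h3le : 3 ≤ (hSfin.toFinset).card := by
    rw [← Set.ncard_eq_toFinset_card (colorIm r) hSfin]; exact hlt
  obtain ⟨t, hts, ht3⟩ := Finset.exists_subset_card_eq h3le
  rw [Finset.card_eq_three] at ht3
  obtain ⟨α, β, γ, hab, hac, hbc, rfl⟩ := ht3
  have hαS : α ∈ colorIm r := hSfin.mem_toFinset.mp (hts (by simp))
  have hβS : β ∈ colorIm r := hSfin.mem_toFinset.mp (hts (by simp))
  have hγS : γ ∈ colorIm r := hSfin.mem_toFinset.mp (hts (by simp))
  have : Nonempty X := by obtain ⟨x, -, -⟩ := hαS; exact ⟨x⟩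
  -- witnesses for degree-2 colors
  have hwit : ∀ c ∈ Mdeg r 2, ∃ x y z : X, y ≠ x ∧ z ≠ x ∧ y ≠ z ∧ r x y = c ∧ r x z = c := by
    intro c hc
    obtain ⟨x, hx⟩ := hc
    obtain ⟨y, z, hy, hz, hyz⟩ :=
      (Set.one_lt_ncard_iff (s := {y | y ≠ x ∧ r x y = c}) (Set.toFinite _)).mp
        (lt_of_lt_of_le one_lt_two hx)
    exact ⟨x, y, z, hy.1, hz.1, hyz, hy.2, hz.2⟩
  choose! x0 y0 z0 hh1 hh2 hh3 hh4 hh5 using hwit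
  set g : C → C := fun c => r (y0 c) (z0 c) with hg
  -- f maps Mdeg into A3
  have hmaps : ∀ c ∈ Mdeg r 2, ({c, c, g c} : Multiset C) ∈ A3 r := by
    intro c hc
    refine ⟨y0 c, x0 c, z0 c, hh1 c hc, (hh2 c hc).symm, hh3 c hc, ?_⟩
    rw [← hsym (x0 c) (y0 c), hh4 c hc, hh5 c hc]
  -- f is injective on Mdeg, so its image is all of A3
  have hinj : Set.InjOn (fun c => ({c, c, g c} : Multiset C)) (Mdeg r 2) := by
    intro a ha b hb h
    exact (ms_pair_eq h).1
  have himg : (fun c => ({c, c, g c} : Multiset C)) '' (Mdeg r 2) = A3 r := by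
    apply Set.eq_of_subset_of_ncard_le
    · rintro m ⟨c, hc, rfl⟩; exact hmaps c hc
    · rw [Set.ncard_image_of_injOn hinj, ← h3m]; exact le_rfl
    · exact hAfin
  have hsurj : ∀ m ∈ A3 r, ∃ c, m = ({c, c, g c} : Multiset C) := by
    intro m hm
    rw [← himg] at hm
    obtain ⟨c, -, h⟩ := hm
    exact ⟨c, h.symm⟩
  -- every triangle with a doubled color has third color g of it
  have L1 : ∀ {c δ : C}, ({c, c, δ} : Multiset C) ∈ A3 r → δ = g c := by
    intro c δ h
    obtain ⟨e, he⟩ := hsurj _ h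
    obtain ⟨h1, h2⟩ := ms_pair_eq he
    rw [h2, h1]
  -- no rainbow triangles
  have L2 : ∀ {a b c : C}, ({a, b, c} : Multiset C) ∈ A3 r → a = b ∨ b = c ∨ a = c := by
    intro a b c h
    obtain ⟨e, he⟩ := hsurj _ h
    have ha : a ∈ ({e, e, g e} : Multiset C) := by rw [← he]; simp
    have hb : b ∈ ({e, e, g e} : Multiset C) := by rw [← he]; simp
    have hc : c ∈ ({e, e, g e} : Multiset C) := by rw [← he]; simp
    simp only [Multiset.insert_eq_cons, Multiset.mem_cons, Multiset.mem_singleton] at ha hb hc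
    have ha2 : a = e ∨ a = g e := by tauto
    have hb2 : b = e ∨ b = g e := by tauto
    have hc2 : c = e ∨ c = g e := by tauto
    rcases ha2 with rfl | rfl <;> rcases hb2 with rfl | rfl <;> rcases hc2 with rfl | rfl <;> simp
  have TriMem : ∀ x y z : X, x ≠ y → y ≠ z → x ≠ z →
      ({r x y, r y z, r x z} : Multiset C) ∈ A3 r :=
    fun x y z h1 h2 h3 => ⟨x, y, z, h1, h2, h3, rfl⟩
  -- two distinct colors at a vertex
  have pairAt : ∀ x y z : X, y ≠ x → z ≠ x → r x y ≠ r x z →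
      (r y z = r x y ∧ g (r x y) = r x z) ∨ (r y z = r x z ∧ g (r x z) = r x y) := by
    intro x y z hy hz hne
    have hyz : y ≠ z := fun h => hne (by rw [h])
    have hm : ({r x y, r x z, r y z} : Multiset C) ∈ A3 r := by
      have := TriMem y x z hy hz.symm hyz
      rwa [← hsym x y] at this
    rcases L2 hm with h | h | h
    · exact absurd h hne
    · -- r x z = r y z
      right
      refine ⟨h.symm, ?_⟩
      rw [← h, tri_swap12, tri_swap23] at hm
      exact (L1 hm).symm
    · -- r x y = r y z
      left
      refine ⟨h.symm, ?_⟩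
      rw [← h, tri_swap23] at hm
      exact (L1 hm).symm
  -- no three distinct colors at a vertex
  have no3 : ∀ x y z w : X, y ≠ x → z ≠ x → w ≠ x →
      r x y ≠ r x z → r x y ≠ r x w → r x z ≠ r x w → False := by
    intro x y z w hy hz hw h12 h13 h23
    have hyz : y ≠ z := fun h => h12 (by rw [h])
    have hyw : y ≠ w := fun h => h13 (by rw [h])
    have hzw : z ≠ w := fun h => h23 (by rw [h])
    have P1 := pairAt x y z hy hz h12
    have P2 := pairAt x y w hy hw h13
    have P3 := pairAt x z w hz hw h23
    rcases P1 with ⟨e1, g1⟩ | ⟨e1, g1⟩ <;> rcases P2 with ⟨e2, g2⟩ | ⟨e2, g2⟩ <;>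
      rcases P3 with ⟨e3, g3⟩ | ⟨e3, g3⟩
    · exact h23 (g1.symm.trans g2)
    · exact h23 (g1.symm.trans g2)
    · -- g(α)=β, g(γ)=α, g(β)=γ : rainbow
      have hm := TriMem y z w hyz hzw hyw
      rw [e1, e2, e3] at hm
      rcases L2 hm with h | h | h
      · exact h12 h
      · exact h23 h
      · exact h13 h
    · exact h12 (g2.symm.trans g3)
    · exact h13 (g1.symm.trans g3)
    · -- g(β)=α, g(α)=γ, g(γ)=β : rainbow
      have hm := TriMem y z w hyz hzw hyw
      rw [e1, e2, e3] at hm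
      rcases L2 hm with h | h | h
      · exact h23 h
      · exact h13 h.symm
      · exact h12 h.symm
    · exact h13 (g1.symm.trans g3)
    · exact h12 (g2.symm.trans g3)
  -- any two distinct colors appear at a common vertex
  have common : ∀ δ ε : C, δ ∈ colorIm r → ε ∈ colorIm r → δ ≠ ε →
      ∃ v p q : X, p ≠ v ∧ q ≠ v ∧ r v p = δ ∧ r v q = ε := by
    intro δ ε hδ hε hne
    by_contra hno
    push_neg at hno
    obtain ⟨x, y, hxy, hrxy⟩ := hδ
    obtain ⟨u, v, huv, hruv⟩ := hε
    have hxu : x ≠ u := by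
      intro h; subst h
      exact hno x y v hxy.symm huv.symm hrxy hruv
    have hxv : x ≠ v := by
      intro h; subst h
      exact hno x y u hxy.symm huv hrxy ((hsym x u).trans hruv)
    have hyu : y ≠ u := by
      intro h; subst h
      exact hno y x v hxy huv.symm ((hsym y x).trans hrxy) hruv
    have hyv : y ≠ v := by
      intro h; subst h
      exact hno y x u hxy huv ((hsym y x).trans hrxy) ((hsym y u).trans hruv)
    have hcδ : r x u ≠ δ := by
      intro h
      exact hno u x v hxu huv.symm ((hsym u x).trans h) hruv
    have hcε : r x u ≠ ε := hno x y u hxy.symm hxu.symm hrxy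
    have hruy : r u y = r u x := by
      have h1 : r u y ≠ ε := by
        intro h
        exact hno y x u hxy hyu.symm ((hsym y x).trans hrxy) ((hsym y u).trans h)
      by_contra hne2
      refine no3 u v x y huv.symm hxu hyu ?_ ?_ ?_
      · rw [hruv, hsym u x]; exact fun h => hcε h.symm
      · rw [hruv]; exact fun h => h1 h.symm
      · exact fun h => hne2 h.symm
    have hrxv : r x v = r x u := by
      have h1 : r x v ≠ δ := by
        intro h
        exact hno v x u hxv huv ((hsym v x).trans h) ((hsym v u).trans hruv)
      by_contra hne2
      refine no3 x y u v hxy.symm hxu.symm hxv.symm ?_ ?_ ?_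
      · rw [hrxy]; exact fun h => hcδ h.symm
      · rw [hrxy]; exact fun h => h1 h.symm
      · exact fun h => hne2 h.symm
    have t1 : δ = g (r x u) := by
      have hm := TriMem x y u hxy hyu hxu
      rw [hrxy, (hsym y u).trans hruy, hsym u x, tri_swap12, tri_swap23] at hm
      exact L1 hm
    have t2 : ε = g (r x u) := by
      have hm := TriMem x u v hxu huv hxv
      rw [hruv, hrxv, tri_swap23] at hm
      exact L1 hm
    exact hne (t1.trans t2.symm)
  -- main argument
  obtain ⟨x1, p1, q1, hp1, hq1, hc1a, hc1b⟩ := common α β hαS hβS hab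
  obtain ⟨x2, p2, q2, hp2, hq2, hc2b, hc2c⟩ := common β γ hβS hγS hbc
  obtain ⟨x3, p3, q3, hp3, hq3, hc3a, hc3c⟩ := common α γ hαS hγS hac
  have h12 : x1 ≠ x2 := by
    intro h; subst h
    refine no3 x1 p1 q1 q2 hp1 hq1 hq2 ?_ ?_ ?_
    · rw [hc1a, hc1b]; exact hab
    · rw [hc1a, hc2c]; exact hac
    · rw [hc1b, hc2c]; exact hbc
  have h13 : x1 ≠ x3 := by
    intro h; subst h
    refine no3 x1 p1 q1 q3 hp1 hq1 hq3 ?_ ?_ ?_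
    · rw [hc1a, hc1b]; exact hab
    · rw [hc1a, hc3c]; exact hac
    · rw [hc1b, hc3c]; exact hbc
  have h23 : x2 ≠ x3 := by
    intro h; subst h
    refine no3 x2 p2 q2 p3 hp2 hq2 hp3 ?_ ?_ ?_
    · rw [hc2b, hc2c]; exact hbc
    · rw [hc2b, hc3a]; exact fun h => hab h.symm
    · rw [hc2c, hc3a]; exact fun h => hac h.symm
  -- the edge x1x2 is colored β, x1x3 is α, x2x3 is γ
  have e12 : r x1 x2 = β := by
    have hA : r x1 x2 = α ∨ r x1 x2 = β := by
      by_contra hcon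
      push_neg at hcon
      refine no3 x1 p1 q1 x2 hp1 hq1 h12.symm ?_ ?_ ?_
      · rw [hc1a, hc1b]; exact hab
      · rw [hc1a]; exact fun h => hcon.1 h.symm
      · rw [hc1b]; exact fun h => hcon.2 h.symm
    have hB : r x1 x2 = β ∨ r x1 x2 = γ := by
      by_contra hcon
      push_neg at hcon
      refine no3 x2 p2 q2 x1 hp2 hq2 h12 ?_ ?_ ?_
      · rw [hc2b, hc2c]; exact hbc
      · rw [hc2b, ← hsym x1 x2]; exact fun h => hcon.1 h.symm
      · rw [hc2c, ← hsym x1 x2]; exact fun h => hcon.2 h.symm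
    rcases hA with h | h
    · rcases hB with h' | h'
      · exact absurd (h.symm.trans h') hab
      · exact absurd (h.symm.trans h') hac
    · exact h
  have e13 : r x1 x3 = α := by
    have hA : r x1 x3 = α ∨ r x1 x3 = β := by
      by_contra hcon
      push_neg at hcon
      refine no3 x1 p1 q1 x3 hp1 hq1 h13.symm ?_ ?_ ?_
      · rw [hc1a, hc1b]; exact hab
      · rw [hc1a]; exact fun h => hcon.1 h.symm
      · rw [hc1b]; exact fun h => hcon.2 h.symm
    have hB : r x1 x3 = α ∨ r x1 x3 = γ := by
      by_contra hcon
      push_neg at hcon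
      refine no3 x3 p3 q3 x1 hp3 hq3 h13 ?_ ?_ ?_
      · rw [hc3a, hc3c]; exact hac
      · rw [hc3a, ← hsym x1 x3]; exact fun h => hcon.1 h.symm
      · rw [hc3c, ← hsym x1 x3]; exact fun h => hcon.2 h.symm
    rcases hA with h | h
    · exact h
    · rcases hB with h' | h'
      · exact h'
      · exact absurd (h.symm.trans h') hbc
  have e23 : r x2 x3 = γ := by
    have hA : r x2 x3 = β ∨ r x2 x3 = γ := by
      by_contra hcon
      push_neg at hcon
      refine no3 x2 p2 q2 x3 hp2 hq2 h23.symm ?_ ?_ ?_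
      · rw [hc2b, hc2c]; exact hbc
      · rw [hc2b]; exact fun h => hcon.1 h.symm
      · rw [hc2c]; exact fun h => hcon.2 h.symm
    have hB : r x2 x3 = α ∨ r x2 x3 = γ := by
      by_contra hcon
      push_neg at hcon
      refine no3 x3 p3 q3 x2 hp3 hq3 h23 ?_ ?_ ?_
      · rw [hc3a, hc3c]; exact hac
      · rw [hc3a, ← hsym x2 x3]; exact fun h => hcon.1 h.symm
      · rw [hc3c, ← hsym x2 x3]; exact fun h => hcon.2 h.symm
    rcases hA with h | h
    · rcases hB with h' | h'
      · exact absurd (h.symm.trans h') (fun h => hab h.symm)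
      · exact h'
    · exact h
  -- rainbow triangle x1 x2 x3 : contradiction
  have hm := TriMem x1 x2 x3 h12 h23 h13
  rw [e12, e23, e13] at hm
  rcases L2 hm with h | h | h
  · exact hbc h
  · exact hac h.symm
  · exact hab h.symm
end

section
/- Let (X,r) be a finite colored space and let α,β,γ,δ be colors of r such that the multiset βγδ lies in A_3(r) and is the unique element of A_3(r) in which δ appears, and such that α ∉ {β,γ,δ}. Then either αβγ ∈ A_3(r), or both ββα ∈ A_3(r) and γγα ∈ A_3(r). Furthermore, if |X| ≥ 5, then β ∈ M_2(r) and γ ∈ M_2(r). -/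
private lemma pair_eq' {C : Type*} {a b β γ : C} (h : ({a, b} : Multiset C) = {β, γ}) :
    (a = β ∧ b = γ) ∨ (a = γ ∧ b = β) := by
  rcases Multiset.cons_eq_cons.mp h with ⟨h1, h2⟩ | ⟨hne, cs, h1, h2⟩
  · exact Or.inl ⟨h1, by simpa using h2⟩
  · rcases (Multiset.singleton_eq_cons_iff _).mp h1 with ⟨hb, hcs⟩
    subst hcs
    rcases (Multiset.singleton_eq_cons_iff _).mp h2 with ⟨hg, -⟩
    exact Or.inr ⟨hg.symm, hb⟩

private lemma triple_eq' {C : Type*} {a b β γ δ : C}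
    (h : ({δ, a, b} : Multiset C) = {β, γ, δ}) :
    (a = β ∧ b = γ) ∨ (a = γ ∧ b = β) := by
  have h2 : ({β, γ, δ} : Multiset C) = δ ::ₘ {β, γ} := by
    show β ::ₘ γ ::ₘ δ ::ₘ 0 = δ ::ₘ β ::ₘ γ ::ₘ 0
    rw [Multiset.cons_swap γ δ, Multiset.cons_swap β δ]
  rw [h2] at h
  exact pair_eq' ((Multiset.cons_inj_right δ).mp h)

private lemma mem_mdeg2 {X C : Type*} [Fintype X] (r : X → X → C) {c : C} {x w1 w2 : X}
    (h1 : w1 ≠ x) (h2 : w2 ≠ x) (h12 : w1 ≠ w2)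
    (hc1 : r x w1 = c) (hc2 : r x w2 = c) : c ∈ Mdeg r 2 := by
  refine ⟨x, ?_⟩
  have hsub : ({w1, w2} : Set X) ⊆ {y | y ≠ x ∧ r x y = c} := by
    rintro z (rfl | rfl)
    · exact ⟨h1, hc1⟩
    · exact ⟨h2, hc2⟩
  calc 2 = ({w1, w2} : Set X).ncard := (Set.ncard_pair h12).symm
    _ ≤ _ := Set.ncard_le_ncard hsub (Set.toFinite _)

private lemma exists_notmem {X : Type*} [Fintype X] (s : Finset X)
    (h : s.card < Fintype.card X) : ∃ a, a ∉ s := by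
  by_contra h'
  push_neg at h'
  have hsub : (Finset.univ : Finset X) ⊆ s := fun a _ => h' a
  have := Finset.card_le_card hsub
  simp [Finset.card_univ] at this
  omega

/-- Lemma `lem:delta`. -/
theorem lem_delta {X C : Type*} [Fintype X] (r : X → X → C)
    (hsym : ∀ x y, r x y = r y x) (α β γ δ : C)
    (hα : α ∈ colorIm r) (hβ : β ∈ colorIm r) (hγ : γ ∈ colorIm r) (hδ : δ ∈ colorIm r)
    (hβγδ : ({β, γ, δ} : Multiset C) ∈ A3 r)
    (huniq : ∀ m ∈ A3 r, δ ∈ m → m = ({β, γ, δ} : Multiset C))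
    (hne : α ∉ ({β, γ, δ} : Set C)) :
    (({α, β, γ} : Multiset C) ∈ A3 r ∨
        (({β, β, α} : Multiset C) ∈ A3 r ∧ ({γ, γ, α} : Multiset C) ∈ A3 r)) ∧
      (5 ≤ Fintype.card X → β ∈ Mdeg r 2 ∧ γ ∈ Mdeg r 2) := by
  classical
  obtain ⟨x, y, hxy, hrxy⟩ := hδ
  obtain ⟨u, v, huv, hruv⟩ := hα
  simp only [Set.mem_insert_iff, Set.mem_singleton_iff, not_or] at hne
  obtain ⟨hαβ, hαγ, hαδ⟩ := hne
  have key : ∀ w, w ≠ x → w ≠ y →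
      (r y w = β ∧ r x w = γ) ∨ (r y w = γ ∧ r x w = β) := by
    intro w hwx hwy
    have hm : ({r x y, r y w, r x w} : Multiset C) ∈ A3 r :=
      ⟨x, y, w, hxy, Ne.symm hwy, Ne.symm hwx, rfl⟩
    have hmem : δ ∈ ({r x y, r y w, r x w} : Multiset C) := by
      rw [hrxy]; exact Multiset.mem_cons_self _ _
    have h := huniq _ hm hmem
    rw [hrxy] at h
    exact triple_eq' h
  have hnot : ∀ w, w ≠ x → w ≠ y → r x w ≠ α ∧ r y w ≠ α := by
    intro w h1 h2
    rcases key w h1 h2 with ⟨ha, hb⟩ | ⟨ha, hb⟩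
    · exact ⟨by rw [hb]; exact fun h => hαγ h.symm, by rw [ha]; exact fun h => hαβ h.symm⟩
    · exact ⟨by rw [hb]; exact fun h => hαβ h.symm, by rw [ha]; exact fun h => hαγ h.symm⟩
  have hux : u ≠ x := fun h => by
    rw [h] at hruv
    by_cases h2 : v = y
    · rw [h2] at hruv; exact hαδ (hruv.symm.trans hrxy)
    · exact (hnot v (fun hv => huv (h.trans hv.symm)) h2).1 hruv
  have huy : u ≠ y := fun h => by
    rw [h] at hruv
    by_cases h2 : v = x
    · rw [h2, ← hsym x y] at hruv; exact hαδ (hruv.symm.trans hrxy)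
    · exact (hnot v h2 (fun hv => huv (h.trans hv.symm))).2 hruv
  have hvx : v ≠ x := fun h => by
    rw [h, hsym u x] at hruv
    by_cases h2 : u = y
    · rw [h2] at hruv; exact hαδ (hruv.symm.trans hrxy)
    · exact (hnot u (fun hu => huv (hu.trans h.symm)) h2).1 hruv
  have hvy : v ≠ y := fun h => by
    rw [h, hsym u y] at hruv
    by_cases h2 : u = x
    · rw [h2, ← hsym x y] at hruv; exact hαδ (hruv.symm.trans hrxy)
    · exact (hnot u h2 (fun hu => huv (hu.trans h.symm))).2 hruv
  constructor
  · rcases key u hux huy with ⟨hyu, hxu⟩ | ⟨hyu, hxu⟩ <;>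
      rcases key v hvx hvy with ⟨hyv, hxv⟩ | ⟨hyv, hxv⟩
    · refine Or.inr ⟨⟨u, y, v, huy, Ne.symm hvy, huv, ?_⟩, ⟨u, x, v, hux, Ne.symm hvx, huv, ?_⟩⟩
      · rw [hsym u y, hyu, hyv, hruv]
      · rw [hsym u x, hxu, hxv, hruv]
    · exact Or.inl ⟨v, u, y, Ne.symm huv, huy, hvy,
        by rw [hsym v u, hruv, hsym u y, hyu, hsym v y, hyv]⟩
    · exact Or.inl ⟨u, v, y, huv, hvy, huy,
        by rw [hruv, hsym v y, hyv, hsym u y, hyu]⟩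
    · refine Or.inr ⟨⟨u, x, v, hux, Ne.symm hvx, huv, ?_⟩, ⟨u, y, v, huy, Ne.symm hvy, huv, ?_⟩⟩
      · rw [hsym u x, hxu, hxv, hruv]
      · rw [hsym u y, hyu, hyv, hruv]
  · intro h5
    obtain ⟨w1, hw1⟩ := exists_notmem ({x, y} : Finset X) (by
      have h2 : ({x, y} : Finset X).card ≤ 2 := (Finset.card_insert_le _ _).trans (by simp)
      omega)
    obtain ⟨w2, hw2⟩ := exists_notmem ({x, y, w1} : Finset X) (by
      have h2 : ({y, w1} : Finset X).card ≤ 2 := (Finset.card_insert_le _ _).trans (by simp)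
      have h3 : ({x, y, w1} : Finset X).card ≤ 3 := (Finset.card_insert_le _ _).trans (by omega)
      omega)
    obtain ⟨w3, hw3⟩ := exists_notmem ({x, y, w1, w2} : Finset X) (by
      have h2 : ({w1, w2} : Finset X).card ≤ 2 := (Finset.card_insert_le _ _).trans (by simp)
      have h3 : ({y, w1, w2} : Finset X).card ≤ 3 := (Finset.card_insert_le _ _).trans (by omega)
      have h4 : ({x, y, w1, w2} : Finset X).card ≤ 4 := (Finset.card_insert_le _ _).trans (by omega)
      omega)
    simp only [Finset.mem_insert, Finset.mem_singleton, not_or] at hw1 hw2 hw3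
    obtain ⟨h1x, h1y⟩ := hw1
    obtain ⟨h2x, h2y, h21⟩ := hw2
    obtain ⟨h3x, h3y, h31, h32⟩ := hw3
    rcases key w1 h1x h1y with ⟨a1, b1⟩ | ⟨a1, b1⟩ <;>
      rcases key w2 h2x h2y with ⟨a2, b2⟩ | ⟨a2, b2⟩ <;>
        rcases key w3 h3x h3y with ⟨a3, b3⟩ | ⟨a3, b3⟩ <;>
      first
      | exact ⟨mem_mdeg2 r h1y h2y (Ne.symm h21) a1 a2, mem_mdeg2 r h1x h2x (Ne.symm h21) b1 b2⟩
      | exact ⟨mem_mdeg2 r h1x h2x (Ne.symm h21) b1 b2, mem_mdeg2 r h1y h2y (Ne.symm h21) a1 a2⟩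
      | exact ⟨mem_mdeg2 r h1y h3y (Ne.symm h31) a1 a3, mem_mdeg2 r h1x h3x (Ne.symm h31) b1 b3⟩
      | exact ⟨mem_mdeg2 r h1x h3x (Ne.symm h31) b1 b3, mem_mdeg2 r h1y h3y (Ne.symm h31) a1 a3⟩
      | exact ⟨mem_mdeg2 r h2y h3y (Ne.symm h32) a2 a3, mem_mdeg2 r h2x h3x (Ne.symm h32) b2 b3⟩
      | exact ⟨mem_mdeg2 r h2x h3x (Ne.symm h32) b2 b3, mem_mdeg2 r h2y h3y (Ne.symm h32) a2 a3⟩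
end

section
/- Let (X,r) be a finite colored space with a_2(r) = 4, with colors α,β,γ,δ (so Im(r) = {α,β,γ,δ} with these four colors distinct). If {α,β,γ} is closed, then αδδ ∈ A_3(r), βδδ ∈ A_3(r), and γδδ ∈ A_3(r). -/
/-- Lemma `lem:3c`: with four distinct colors `α, β, γ, δ` and
`{α, β, γ}` closed, the triangles `αδδ`, `βδδ`, `γδδ` all occur. -/
theorem lem_3c {X C : Type*} [Fintype X] (r : X → X → C)
    (hsym : ∀ x y, r x y = r y x) (α β γ δ : C)
    (hdist : α ≠ β ∧ α ≠ γ ∧ α ≠ δ ∧ β ≠ γ ∧ β ≠ δ ∧ γ ≠ δ)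
    (hIm : colorIm r = {α, β, γ, δ}) (ha2 : a2 r = 4)
    (hclosed : IsClosedColors r {α, β, γ}) :
    ({α, δ, δ} : Multiset C) ∈ A3 r ∧ ({β, δ, δ} : Multiset C) ∈ A3 r ∧
      ({γ, δ, δ} : Multiset C) ∈ A3 r := by
  obtain ⟨hab, hac, had, hbc, hbd, hcd⟩ := hdist
  set Γ : Set C := {α, β, γ} with hΓ
  have hcol : ∀ x y : X, x ≠ y → r x y ∉ Γ → r x y = δ := by
    intro x y hxy h
    have hmem : r x y ∈ colorIm r := ⟨x, y, hxy, rfl⟩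
    rw [hIm] at hmem
    rcases hmem with h1 | h1 | h1 | h1
    · exact absurd (by simp [hΓ, h1]) h
    · exact absurd (by simp [hΓ, h1]) h
    · exact absurd (by simp [hΓ, h1]) h
    · exact h1
  have htrans : ∀ x y z : X, x ≠ y → y ≠ z → x ≠ z →
      r x y ∈ Γ → r y z ∈ Γ → r x z ∈ Γ := by
    intro x y z hxy hyz hxz h1 h2
    exact hclosed (r x y) (r y z) (r x z) h1 h2 ⟨x, y, z, hxy, hyz, hxz, rfl⟩
  have hδmem : δ ∈ colorIm r := by rw [hIm]; simp
  obtain ⟨u, v, huv, hruv⟩ := hδmem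
  have hδΓ : r u v ∉ Γ := by
    rw [hruv]
    simp [hΓ, had.symm, hbd.symm, hcd.symm]
  have key : ∀ ε : C, ε ∈ Γ → ε ∈ colorIm r → ({ε, δ, δ} : Multiset C) ∈ A3 r := by
    intro ε hεΓ hεIm
    obtain ⟨x, y, hxy, hrxy⟩ := hεIm
    have hΓxy : r x y ∈ Γ := hrxy ▸ hεΓ
    have hz : ∃ z : X, z ≠ x ∧ r x z ∉ Γ := by
      by_cases hux : u = x
      · refine ⟨v, ?_, ?_⟩
        · exact fun h => huv (hux.trans h.symm)
        · rw [← hux]; exact hδΓ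
      · by_cases hΓu : r x u ∈ Γ
        · have hvx : v ≠ x := by
            intro h
            apply hδΓ
            rw [hsym u v, h]
            exact hΓu
          refine ⟨v, hvx, ?_⟩
          intro hΓv
          exact hδΓ (htrans u x v (fun h => hux h) hvx.symm huv
            (by rwa [hsym u x]) hΓv)
        · exact ⟨u, hux, hΓu⟩
    obtain ⟨z, hzx, hΓxz⟩ := hz
    have hzy : z ≠ y := by
      intro h; exact hΓxz (h ▸ hΓxy)
    have hrxz : r x z = δ := hcol x z hzx.symm hΓxz
    have hryz : r y z = δ := by
      apply hcol y z hzy.symm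
      intro h
      exact hΓxz (htrans x y z hxy hzy.symm hzx.symm hΓxy h)
    exact ⟨x, y, z, hxy, hzy.symm, hzx.symm, by
      rw [hrxy, hrxz, hryz]⟩
  refine ⟨key α (by simp [hΓ]) ?_, key β (by simp [hΓ]) ?_, key γ (by simp [hΓ]) ?_⟩ <;>
    rw [hIm] <;> simp
end

section
/- Let (X,r) be a finite colored space with a_2(r) = a_3(r) = 4. Suppose colors α ≠ β satisfy: {α,β} is closed; ααβ ∈ A_3(r); and there exists an element of A_3(r) distinct from ααβ all of whose three entries belong to {α,β}. Let Y be a connected component of the graph (X, E_α ∪ E_β) containing elements x_0,x_1,x_2 with r(x_0,x_1) = r(x_0,x_2) = α and r(x_1,x_2) = β, and let x ∈ X\Y. Then r(x_1,x) = r(x_2,x), r(x_0,x) ≠ r(x_1,x), the color r(x_0,x) does not belong to M_2(r), |X\Y| = 1, and A_3(r) = {βββ, ααβ, γγβ, αγδ} where γ = r(x_2,x) and δ = r(x_0,x). -/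
section lemAabHelpers

variable {C : Type*}

private lemma mem3 {x a b c : C} :
    x ∈ ({a, b, c} : Multiset C) ↔ x = a ∨ x = b ∨ x = c := by simp

private lemma swap12 (a b c : C) : ({a, b, c} : Multiset C) = {b, a, c} := by
  simp only [Multiset.insert_eq_cons]
  exact Multiset.cons_swap a b {c}

private lemma swap23 (a b c : C) : ({a, b, c} : Multiset C) = {a, c, b} := by
  simp only [Multiset.insert_eq_cons]
  congr 1
  exact Multiset.cons_swap b c 0

private lemma ncard4 {a b c d : C}
    (hab : a ≠ b) (hac : a ≠ c) (had : a ≠ d)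
    (hbc : b ≠ c) (hbd : b ≠ d) (hcd : c ≠ d) :
    ({a, b, c, d} : Set C).ncard = 4 := by
  rw [Set.ncard_insert_of_notMem (by simp [hab, hac, had])
      (((Set.finite_singleton d).insert c).insert b),
    Set.ncard_insert_of_notMem (by simp [hbc, hbd]) ((Set.finite_singleton d).insert c),
    Set.ncard_insert_of_notMem (by simp [hcd]) (Set.finite_singleton d),
    Set.ncard_singleton]

private lemma ncard_ge_five {s : Set C} {a b c d e : C}
    (ha : a ∈ s) (hb : b ∈ s) (hc : c ∈ s) (hd : d ∈ s) (he : e ∈ s)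
    (hab : a ≠ b) (hac : a ≠ c) (had : a ≠ d) (hae : a ≠ e)
    (hbc : b ≠ c) (hbd : b ≠ d) (hbe : b ≠ e)
    (hcd : c ≠ d) (hce : c ≠ e) (hde : d ≠ e)
    (hfin : s.Finite) : 5 ≤ s.ncard := by
  have h1 : ({a, b, c, d, e} : Set C) ⊆ s := by
    rintro t ht
    simp only [Set.mem_insert_iff, Set.mem_singleton_iff] at ht
    rcases ht with rfl | rfl | rfl | rfl | rfl <;> assumption
  have h2 : ({a, b, c, d, e} : Set C).ncard = 5 := by
    rw [Set.ncard_insert_of_notMem (by simp [hab, hac, had, hae])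
        ((((Set.finite_singleton e).insert d).insert c).insert b),
      Set.ncard_insert_of_notMem (by simp [hbc, hbd, hbe])
        (((Set.finite_singleton e).insert d).insert c),
      Set.ncard_insert_of_notMem (by simp [hcd, hce]) ((Set.finite_singleton e).insert d),
      Set.ncard_insert_of_notMem (by simp [hde]) (Set.finite_singleton e),
      Set.ncard_singleton]
  calc 5 = ({a, b, c, d, e} : Set C).ncard := h2.symm
  _ ≤ s.ncard := Set.ncard_le_ncard h1 hfin

end lemAabHelpers

/-- Lemma `lem:aab`. -/
theorem lem_aab {X C : Type*} [Fintype X] (r : X → X → C)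
    (hsym : ∀ x y, r x y = r y x)
    (ha2 : a2 r = 4) (ha3 : a3 r = 4) (α β : C) (hab : α ≠ β)
    (hclosed : IsClosedColors r {α, β})
    (haab : ({α, α, β} : Multiset C) ∈ A3 r)
    (hother : ∃ m ∈ A3 r, m ≠ ({α, α, β} : Multiset C) ∧ ∀ c ∈ m, c ∈ ({α, β} : Set C))
    (x₀ x₁ x₂ x : X)
    (h01 : x₀ ≠ x₁) (h02 : x₀ ≠ x₂) (h12 : x₁ ≠ x₂)
    (hr01 : r x₀ x₁ = α) (hr02 : r x₀ x₂ = α) (hr12 : r x₁ x₂ = β)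
    (hx : x ∉ compOf r {α, β} x₀) :
    r x₁ x = r x₂ x ∧ r x₀ x ≠ r x₁ x ∧ r x₀ x ∉ Mdeg r 2 ∧
      (compOf r {α, β} x₀)ᶜ.ncard = 1 ∧
      A3 r = {({β, β, β} : Multiset C), ({α, α, β} : Multiset C),
        ({r x₂ x, r x₂ x, β} : Multiset C), ({α, r x₂ x, r x₀ x} : Multiset C)} := by
  classical
  obtain ⟨m, hmA3, hmne, hmS⟩ := hother
  set S : Set C := {α, β} with hSdef
  have hαS : α ∈ S := by simp [hSdef]
  have hβS : β ∈ S := by simp [hSdef]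
  have hmemS : ∀ c : C, c ∈ S ↔ c = α ∨ c = β := by intro c; simp [hSdef]
  have hmemaab : ∀ c : C, c ∈ ({α, α, β} : Multiset C) → c ∈ S := by
    intro c hc
    rcases mem3.mp hc with rfl | rfl | rfl
    · exact hαS
    · exact hαS
    · exact hβS
  have ha2' : (colorIm r).ncard = 4 := ha2
  have ha3' : (A3 r).ncard = 4 := ha3
  -- component basics
  have hx₀Y : x₀ ∈ compOf r S x₀ := Relation.ReflTransGen.refl
  have hx₁Y : x₁ ∈ compOf r S x₀ :=
    Relation.ReflTransGen.single ⟨h01, by rw [hr01]; exact hαS⟩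
  have hx₂Y : x₂ ∈ compOf r S x₀ :=
    Relation.ReflTransGen.single ⟨h02, by rw [hr02]; exact hαS⟩
  have L0 : ∀ y, Relation.ReflTransGen (fun a b => a ≠ b ∧ r a b ∈ S) x₀ y →
      y = x₀ ∨ r x₀ y ∈ S := by
    intro y hy
    induction hy with
    | refl => exact Or.inl rfl
    | tail hb hedge ih =>
      rename_i b c
      by_cases hbx : b = x₀
      · exact Or.inr (hbx ▸ hedge.2)
      · rcases ih with h | h
        · exact absurd h hbx
        · by_cases hcx : c = x₀
          · exact Or.inl hcx
          · exact Or.inr (hclosed (r x₀ b) (r b c) (r x₀ c) h hedge.2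
              ⟨x₀, b, c, fun hh => hbx hh.symm, hedge.1, fun hh => hcx hh.symm, rfl⟩)
  have hpair0 : ∀ y, y ∈ compOf r S x₀ → ∀ z, z ∈ compOf r S x₀ →
      y = z ∨ r y z ∈ S := by
    intro y hy z hz
    simp only [compOf, Set.mem_setOf_eq] at hy hz
    induction hz with
    | refl =>
      rcases L0 y hy with h | h
      · exact Or.inl h
      · exact Or.inr (by rw [hsym]; exact h)
    | tail hb hedge ih =>
      rename_i b c
      by_cases hyc : y = c
      · exact Or.inl hyc
      by_cases hyb : y = b
      · exact Or.inr (hyb ▸ hedge.2)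
      rcases ih with h | h
      · exact absurd h hyb
      · exact Or.inr (hclosed (r y b) (r b c) (r y c) h hedge.2
          ⟨y, b, c, hyb, hedge.1, hyc, rfl⟩)
  have hout : ∀ w, w ∉ compOf r S x₀ → ∀ y, y ∈ compOf r S x₀ → r y w ∉ S := by
    intro w hw y hy hc
    exact hw (Relation.ReflTransGen.tail hy ⟨fun h => hw (h ▸ hy), hc⟩)
  have hx₀x : x₀ ≠ x := fun h => hx (h ▸ hx₀Y)
  have hx₁x : x₁ ≠ x := fun h => hx (h ▸ hx₁Y)
  have hx₂x : x₂ ≠ x := fun h => hx (h ▸ hx₂Y)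
  have hδS : r x₀ x ∉ S := hout x hx x₀ hx₀Y
  have hγ₁S : r x₁ x ∉ S := hout x hx x₁ hx₁Y
  have hγS : r x₂ x ∉ S := hout x hx x₂ hx₂Y
  have hfin : (A3 r).Finite := by
    by_contra h
    rw [Set.Infinite.ncard h] at ha3'
    exact absurd ha3' (by norm_num)
  have hT12 : ({β, r x₂ x, r x₁ x} : Multiset C) ∈ A3 r :=
    ⟨x₁, x₂, x, h12, hx₂x, hx₁x, by rw [hr12]⟩
  have hT01 : ({α, r x₁ x, r x₀ x} : Multiset C) ∈ A3 r :=
    ⟨x₀, x₁, x, h01, hx₁x, hx₀x, by rw [hr01]⟩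
  have hT02 : ({α, r x₂ x, r x₀ x} : Multiset C) ∈ A3 r :=
    ⟨x₀, x₂, x, h02, hx₂x, hx₀x, by rw [hr02]⟩
  -- r x₁ x = r x₂ x
  have hγ1 : r x₁ x = r x₂ x := by
    by_contra hne
    have d13 : m ≠ ({β, r x₂ x, r x₁ x} : Multiset C) :=
      fun h => hγS (hmS _ (by rw [h]; simp))
    have d14 : m ≠ ({α, r x₁ x, r x₀ x} : Multiset C) :=
      fun h => hδS (hmS _ (by rw [h]; simp))
    have d15 : m ≠ ({α, r x₂ x, r x₀ x} : Multiset C) :=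
      fun h => hδS (hmS _ (by rw [h]; simp))
    have d23 : ({α, α, β} : Multiset C) ≠ ({β, r x₂ x, r x₁ x} : Multiset C) :=
      fun h => hγS (hmemaab _ (by rw [h]; simp))
    have d24 : ({α, α, β} : Multiset C) ≠ ({α, r x₁ x, r x₀ x} : Multiset C) :=
      fun h => hδS (hmemaab _ (by rw [h]; simp))
    have d25 : ({α, α, β} : Multiset C) ≠ ({α, r x₂ x, r x₀ x} : Multiset C) :=
      fun h => hδS (hmemaab _ (by rw [h]; simp))
    have d34 : ({β, r x₂ x, r x₁ x} : Multiset C) ≠ ({α, r x₁ x, r x₀ x} : Multiset C) := by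
      intro h
      have hα : α ∈ ({β, r x₂ x, r x₁ x} : Multiset C) := by rw [h]; simp
      rcases mem3.mp hα with h' | h' | h'
      · exact hab h'
      · exact hγS (h' ▸ hαS)
      · exact hγ₁S (h' ▸ hαS)
    have d35 : ({β, r x₂ x, r x₁ x} : Multiset C) ≠ ({α, r x₂ x, r x₀ x} : Multiset C) := by
      intro h
      have hα : α ∈ ({β, r x₂ x, r x₁ x} : Multiset C) := by rw [h]; simp
      rcases mem3.mp hα with h' | h' | h'
      · exact hab h'
      · exact hγS (h' ▸ hαS)
      · exact hγ₁S (h' ▸ hαS)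
    have d45 : ({α, r x₁ x, r x₀ x} : Multiset C) ≠ ({α, r x₂ x, r x₀ x} : Multiset C) := by
      intro h
      have h1 : r x₁ x ∈ ({α, r x₂ x, r x₀ x} : Multiset C) := by rw [← h]; simp
      rcases mem3.mp h1 with h' | h' | h'
      · exact hγ₁S (h' ▸ hαS)
      · exact hne h'
      · have h2 : r x₂ x ∈ ({α, r x₁ x, r x₀ x} : Multiset C) := by rw [h]; simp
        rcases mem3.mp h2 with h'' | h'' | h''
        · exact hγS (h'' ▸ hαS)
        · exact hne h''.symm
        · exact hne (h'.trans h''.symm)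
    have h5 := ncard_ge_five hmA3 haab hT12 hT01 hT02 hmne d13 d14 d15 d23 d24 d25 d34 d35 d45 hfin
    rw [ha3'] at h5
    omega
  rw [hγ1] at hT12
  -- the four elements of A3
  have d13 : m ≠ ({β, r x₂ x, r x₂ x} : Multiset C) :=
    fun h => hγS (hmS _ (by rw [h]; simp))
  have d14 : m ≠ ({α, r x₂ x, r x₀ x} : Multiset C) :=
    fun h => hδS (hmS _ (by rw [h]; simp))
  have d23 : ({α, α, β} : Multiset C) ≠ ({β, r x₂ x, r x₂ x} : Multiset C) :=
    fun h => hγS (hmemaab _ (by rw [h]; simp))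
  have d24 : ({α, α, β} : Multiset C) ≠ ({α, r x₂ x, r x₀ x} : Multiset C) :=
    fun h => hδS (hmemaab _ (by rw [h]; simp))
  have d34 : ({β, r x₂ x, r x₂ x} : Multiset C) ≠ ({α, r x₂ x, r x₀ x} : Multiset C) := by
    intro h
    have hα : α ∈ ({β, r x₂ x, r x₂ x} : Multiset C) := by rw [h]; simp
    rcases mem3.mp hα with h' | h' | h'
    · exact hab h'
    · exact hγS (h' ▸ hαS)
    · exact hγS (h' ▸ hαS)
  have hA3eq : A3 r = {m, ({α, α, β} : Multiset C), ({β, r x₂ x, r x₂ x} : Multiset C),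
      ({α, r x₂ x, r x₀ x} : Multiset C)} := by
    refine (Set.eq_of_subset_of_ncard_le ?_ ?_ hfin).symm
    · intro t ht
      simp only [Set.mem_insert_iff, Set.mem_singleton_iff] at ht
      rcases ht with rfl | rfl | rfl | rfl
      · exact hmA3
      · exact haab
      · exact hT12
      · exact hT02
    · rw [ha3', ncard4 hmne d13 d14 d23 d24 d34]
  -- r x₂ x ≠ r x₀ x
  have hγδ : r x₂ x ≠ r x₀ x := by
    intro hgd
    have hsub : colorIm r ⊆ ({α, β, r x₂ x} : Set C) := by
      rintro c ⟨u, v, huv, rfl⟩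
      obtain ⟨z, hzu, hzv⟩ : ∃ z : X, z ≠ u ∧ z ≠ v := by
        by_cases h0 : x₀ ≠ u ∧ x₀ ≠ v
        · exact ⟨x₀, h0.1, h0.2⟩
        by_cases h1 : x₁ ≠ u ∧ x₁ ≠ v
        · exact ⟨x₁, h1.1, h1.2⟩
        by_cases h2 : x₂ ≠ u ∧ x₂ ≠ v
        · exact ⟨x₂, h2.1, h2.2⟩
        exfalso
        push_neg at h0 h1 h2
        by_cases h0u : x₀ = u
        · have h1v : x₁ = v := h1 (fun h => h01 (h0u.trans h.symm))
          have h2v : x₂ = v := h2 (fun h => h02 (h0u.trans h.symm))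
          exact h12 (h1v.trans h2v.symm)
        · have h0v : x₀ = v := h0 h0u
          have h1u : x₁ = u := by
            by_contra h1u; exact h01 (h0v.trans (h1 h1u).symm)
          have h2u : x₂ = u := by
            by_contra h2u; exact h02 (h0v.trans (h2 h2u).symm)
          exact h12 (h1u.trans h2u.symm)
      have ht : ({r u v, r v z, r u z} : Multiset C) ∈ A3 r :=
        ⟨u, v, z, huv, fun h => hzv h.symm, fun h => hzu h.symm, rfl⟩
      rw [hA3eq] at ht
      simp only [Set.mem_insert_iff, Set.mem_singleton_iff] at ht
      simp only [Set.mem_insert_iff, Set.mem_singleton_iff]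
      rcases ht with hcase | hcase | hcase | hcase
      · have h1 : r u v ∈ S := hmS _ (by rw [← hcase]; simp)
        rcases (hmemS _).mp h1 with h | h
        · exact Or.inl h
        · exact Or.inr (Or.inl h)
      · have h1 : r u v ∈ S := hmemaab _ (by rw [← hcase]; simp)
        rcases (hmemS _).mp h1 with h | h
        · exact Or.inl h
        · exact Or.inr (Or.inl h)
      · have h1 : r u v ∈ ({β, r x₂ x, r x₂ x} : Multiset C) := by rw [← hcase]; simp
        rcases mem3.mp h1 with h | h | h
        · exact Or.inr (Or.inl h)
        · exact Or.inr (Or.inr h)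
        · exact Or.inr (Or.inr h)
      · have h1 : r u v ∈ ({α, r x₂ x, r x₀ x} : Multiset C) := by rw [← hcase]; simp
        rcases mem3.mp h1 with h | h | h
        · exact Or.inl h
        · exact Or.inr (Or.inr h)
        · exact Or.inr (Or.inr (h.trans hgd.symm))
    have hcard : (colorIm r).ncard ≤ ({α, β, r x₂ x} : Set C).ncard :=
      Set.ncard_le_ncard hsub (((Set.finite_singleton _).insert _).insert _)
    have h3 : ({α, β, r x₂ x} : Set C).ncard ≤ 3 := by
      refine le_trans (Set.ncard_insert_le _ _) ?_
      have h4 := Set.ncard_insert_le β ({r x₂ x} : Set C)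
      rw [Set.ncard_singleton] at h4
      omega
    rw [ha2'] at hcard
    omega
  -- r x₀ x ∉ Mdeg r 2
  have hδM : r x₀ x ∉ Mdeg r 2 := by
    intro hM
    obtain ⟨v, hv⟩ := hM
    have hv' : 1 < ({y | y ≠ v ∧ r v y = r x₀ x} : Set X).ncard :=
      lt_of_lt_of_le one_lt_two hv
    obtain ⟨p, q, hp, hq, hpq⟩ := (Set.one_lt_ncard_iff (Set.toFinite _)).mp hv'
    have ht : ({r v p, r p q, r v q} : Multiset C) ∈ A3 r :=
      ⟨v, p, q, Ne.symm hp.1, hpq, Ne.symm hq.1, rfl⟩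
    rw [hA3eq] at ht
    simp only [Set.mem_insert_iff, Set.mem_singleton_iff] at ht
    have hvp : r v p = r x₀ x := hp.2
    have hvq : r v q = r x₀ x := hq.2
    rcases ht with h | h | h | h
    · exact hδS (hvp ▸ hmS _ (by rw [← h]; simp))
    · exact hδS (hvp ▸ hmemaab _ (by rw [← h]; simp))
    · have h1 : r v p ∈ ({β, r x₂ x, r x₂ x} : Multiset C) := by rw [← h]; simp
      rcases mem3.mp h1 with h' | h' | h'
      · exact hδS (by rw [← hvp, h']; exact hβS)
      · exact hγδ (hvp ▸ h').symm
      · exact hγδ (hvp ▸ h').symm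
    · have h1 : α ∈ ({r v p, r p q, r v q} : Multiset C) := by rw [h]; simp
      rcases mem3.mp h1 with h' | h' | h'
      · exact hδS ((h'.trans hvp) ▸ hαS)
      · have h2 : r x₂ x ∈ ({r v p, r p q, r v q} : Multiset C) := by rw [h]; simp
        rcases mem3.mp h2 with h'' | h'' | h''
        · exact hγδ (h''.trans hvp)
        · exact hγS ((h''.trans h'.symm) ▸ hαS)
        · exact hγδ (h''.trans hvq)
      · exact hδS ((h'.trans hvq) ▸ hαS)
  -- every point outside the component equals x
  have hwx : ∀ w, w ∉ compOf r S x₀ → w = x := by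
    intro w hw
    by_contra hwne
    have hw0 : r x₀ w ∉ S := hout w hw x₀ hx₀Y
    have hw1 : r x₁ w ∉ S := hout w hw x₁ hx₁Y
    have hw2 : r x₂ w ∉ S := hout w hw x₂ hx₂Y
    have hx₀w : x₀ ≠ w := fun h => hw (h ▸ hx₀Y)
    have hx₁w : x₁ ≠ w := fun h => hw (h ▸ hx₁Y)
    have hx₂w : x₂ ≠ w := fun h => hw (h ▸ hx₂Y)
    have ht1 : ({β, r x₂ w, r x₁ w} : Multiset C) ∈ A3 r :=
      ⟨x₁, x₂, w, h12, hx₂w, hx₁w, by rw [hr12]⟩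
    rw [hA3eq] at ht1
    simp only [Set.mem_insert_iff, Set.mem_singleton_iff] at ht1
    have hq : r x₁ w = r x₂ x := by
      rcases ht1 with h | h | h | h
      · exact absurd (hmS _ (by rw [← h]; simp)) hw1
      · exact absurd (hmemaab _ (by rw [← h]; simp)) hw1
      · have h1 : r x₁ w ∈ ({β, r x₂ x, r x₂ x} : Multiset C) := by rw [← h]; simp
        rcases mem3.mp h1 with h' | h' | h'
        · exact absurd (by rw [h']; exact hβS) hw1
        · exact h'
        · exact h'
      · exfalso
        have h1 : α ∈ ({β, r x₂ w, r x₁ w} : Multiset C) := by rw [h]; simp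
        rcases mem3.mp h1 with h' | h' | h'
        · exact hab h'
        · exact hw2 (h' ▸ hαS)
        · exact hw1 (h' ▸ hαS)
    have ht2 : ({α, r x₁ w, r x₀ w} : Multiset C) ∈ A3 r :=
      ⟨x₀, x₁, w, h01, hx₁w, hx₀w, by rw [hr01]⟩
    rw [hq, hA3eq] at ht2
    simp only [Set.mem_insert_iff, Set.mem_singleton_iff] at ht2
    have hw0δ : r x₀ w = r x₀ x := by
      rcases ht2 with h | h | h | h
      · exact absurd (hmS _ (by rw [← h]; simp)) hw0
      · exact absurd (hmemaab _ (by rw [← h]; simp)) hw0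
      · exfalso
        have h1 : α ∈ ({β, r x₂ x, r x₂ x} : Multiset C) := by rw [← h]; simp
        rcases mem3.mp h1 with h' | h' | h'
        · exact hab h'
        · exact hγS (h' ▸ hαS)
        · exact hγS (h' ▸ hαS)
      · have h1 : r x₀ w ∈ ({α, r x₂ x, r x₀ x} : Multiset C) := by rw [← h]; simp
        rcases mem3.mp h1 with h' | h' | h'
        · exact absurd (h' ▸ hαS) hw0
        · exfalso
          have h2 : r x₀ x ∈ ({α, r x₂ x, r x₀ w} : Multiset C) := by rw [h]; simp
          rcases mem3.mp h2 with h'' | h'' | h''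
          · exact hδS (h'' ▸ hαS)
          · exact hγδ h''.symm
          · exact hγδ (h'.symm.trans h''.symm)
        · exact h'
    apply hδM
    refine ⟨x₀, ?_⟩
    have hsub2 : ({x, w} : Set X) ⊆ {y | y ≠ x₀ ∧ r x₀ y = r x₀ x} := by
      rintro y hy
      simp only [Set.mem_insert_iff, Set.mem_singleton_iff] at hy
      rcases hy with rfl | rfl
      · exact ⟨Ne.symm hx₀x, rfl⟩
      · exact ⟨Ne.symm hx₀w, hw0δ⟩
    calc 2 = ({x, w} : Set X).ncard := (Set.ncard_pair (fun h => hwne h.symm)).symm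
    _ ≤ _ := Set.ncard_le_ncard hsub2 (Set.toFinite _)
  have hcompl : (compOf r S x₀)ᶜ = {x} := by
    ext w
    simp only [Set.mem_compl_iff, Set.mem_singleton_iff]
    constructor
    · exact hwx w
    · rintro rfl; exact hx
  have hncard1 : (compOf r S x₀)ᶜ.ncard = 1 := by rw [hcompl, Set.ncard_singleton]
  -- edges inside the component
  have h7 : ∀ y, y ∈ compOf r S x₀ → y ≠ x₀ → r x₀ y = α ∧ r y x = r x₂ x := by
    intro y hy hyx₀
    have hyx : y ≠ x := fun h => hx (h ▸ hy)
    have he : r x₀ y ∈ S :=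
      (hpair0 x₀ hx₀Y y hy).resolve_left (fun h => hyx₀ h.symm)
    have hf : r y x ∉ S := hout x hx y hy
    have ht : ({r x₀ y, r y x, r x₀ x} : Multiset C) ∈ A3 r :=
      ⟨x₀, y, x, fun h => hyx₀ h.symm, hyx, hx₀x, rfl⟩
    rw [hA3eq] at ht
    simp only [Set.mem_insert_iff, Set.mem_singleton_iff] at ht
    rcases ht with h | h | h | h
    · exact absurd (hmS _ (by rw [← h]; simp)) hδS
    · exact absurd (hmemaab _ (by rw [← h]; simp)) hδS
    · exfalso
      have h1 : r x₀ x ∈ ({β, r x₂ x, r x₂ x} : Multiset C) := by rw [← h]; simp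
      rcases mem3.mp h1 with h' | h' | h'
      · exact hδS (by rw [h']; exact hβS)
      · exact hγδ h'.symm
      · exact hγδ h'.symm
    · constructor
      · have he' : r x₀ y ∈ ({α, r x₂ x, r x₀ x} : Multiset C) := by rw [← h]; simp
        rcases mem3.mp he' with h' | h' | h'
        · exact h'
        · exact absurd (h' ▸ he) hγS
        · exact absurd (h' ▸ he) hδS
      · have hf' : r y x ∈ ({α, r x₂ x, r x₀ x} : Multiset C) := by rw [← h]; simp
        rcases mem3.mp hf' with h' | h' | h'
        · exact absurd (by rw [h']; exact hαS) hf
        · exact h'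
        · exfalso
          have h2 : r x₂ x ∈ ({r x₀ y, r y x, r x₀ x} : Multiset C) := by rw [h]; simp
          rcases mem3.mp h2 with h'' | h'' | h''
          · exact hγS (by rw [h'']; exact he)
          · exact hγδ (h''.trans h')
          · exact hγδ h''
  have h8 : ∀ y z, y ∈ compOf r S x₀ → z ∈ compOf r S x₀ → y ≠ x₀ → z ≠ x₀ → y ≠ z →
      r y z = β := by
    intro y z hy hz hy0 hz0 hyz
    have hyx : y ≠ x := fun h => hx (h ▸ hy)
    have hzx : z ≠ x := fun h => hx (h ▸ hz)
    have ht : ({r y z, r z x, r y x} : Multiset C) ∈ A3 r := ⟨y, z, x, hyz, hzx, hyx, rfl⟩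
    rw [(h7 y hy hy0).2, (h7 z hz hz0).2, hA3eq] at ht
    simp only [Set.mem_insert_iff, Set.mem_singleton_iff] at ht
    rcases ht with h | h | h | h
    · exact absurd (hmS _ (by rw [← h]; simp)) hγS
    · exact absurd (hmemaab _ (by rw [← h]; simp)) hγS
    · have h1 : β ∈ ({r y z, r x₂ x, r x₂ x} : Multiset C) := by rw [h]; simp
      rcases mem3.mp h1 with h' | h' | h'
      · exact h'.symm
      · exact absurd (h' ▸ hβS) hγS
      · exact absurd (h' ▸ hβS) hγS
    · exfalso
      have h1 : r x₀ x ∈ ({r y z, r x₂ x, r x₂ x} : Multiset C) := by rw [h]; simp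
      rcases mem3.mp h1 with h' | h' | h'
      · have h2 : α ∈ ({r y z, r x₂ x, r x₂ x} : Multiset C) := by rw [h]; simp
        rcases mem3.mp h2 with h'' | h'' | h''
        · exact hδS ((h''.trans h'.symm) ▸ hαS)
        · exact hγS (h'' ▸ hαS)
        · exact hγS (h'' ▸ hαS)
      · exact hγδ h'.symm
      · exact hγδ h'.symm
  -- m = {β, β, β}
  have hm3 : m = ({β, β, β} : Multiset C) := by
    obtain ⟨u, v, z, huv, hvz, huz, hmdef⟩ := hmA3
    have hu : u ∈ compOf r S x₀ := by
      by_contra hu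
      have hv : v ∈ compOf r S x₀ := by
        by_contra hv; exact huv ((hwx u hu).trans (hwx v hv).symm)
      apply hout x hx v hv
      have h1 : r u v ∈ S := hmS _ (by rw [hmdef]; simp)
      rwa [hwx u hu, hsym x v] at h1
    have hv : v ∈ compOf r S x₀ := by
      by_contra hv
      apply hout x hx u hu
      have h1 : r u v ∈ S := hmS _ (by rw [hmdef]; simp)
      rwa [hwx v hv] at h1
    have hz : z ∈ compOf r S x₀ := by
      by_contra hz
      apply hout x hx u hu
      have h1 : r u z ∈ S := hmS _ (by rw [hmdef]; simp)
      rwa [hwx z hz] at h1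
    by_cases hu0 : u = x₀
    · have hv0 : v ≠ x₀ := fun h => huv (hu0 ▸ h ▸ rfl)
      have hz0 : z ≠ x₀ := fun h => huz (hu0 ▸ h ▸ rfl)
      have e1 : r u v = α := by rw [hu0]; exact (h7 v hv hv0).1
      have e3 : r u z = α := by rw [hu0]; exact (h7 z hz hz0).1
      have e2 : r v z = β := h8 v z hv hz hv0 hz0 hvz
      exfalso; apply hmne
      rw [hmdef, e1, e2, e3]
      exact swap23 α β α
    by_cases hv0 : v = x₀
    · have hu0' : u ≠ x₀ := fun h => huv (h.trans hv0.symm)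
      have hz0 : z ≠ x₀ := fun h => hvz (hv0.trans h.symm)
      have e1 : r u v = α := by rw [hv0, hsym]; exact (h7 u hu hu0').1
      have e2 : r v z = α := by rw [hv0]; exact (h7 z hz hz0).1
      have e3 : r u z = β := h8 u z hu hz hu0' hz0 huz
      exact absurd (by rw [hmdef, e1, e2, e3]) hmne
    by_cases hz0 : z = x₀
    · have hu0' : u ≠ x₀ := fun h => huz (h.trans hz0.symm)
      have hv0' : v ≠ x₀ := fun h => hvz (h.trans hz0.symm)
      have e1 : r u v = β := h8 u v hu hv hu0' hv0' huv
      have e2 : r v z = α := by rw [hz0, hsym]; exact (h7 v hv hv0').1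
      have e3 : r u z = α := by rw [hz0, hsym]; exact (h7 u hu hu0').1
      exfalso; apply hmne
      rw [hmdef, e1, e2, e3, swap12 β α α, swap23 α β α]
    · rw [hmdef, h8 u v hu hv hu0 hv0 huv, h8 v z hv hz hv0 hz0 hvz,
        h8 u z hu hz hu0 hz0 huz]
  refine ⟨hγ1, fun h => hγδ (h.trans hγ1).symm, hδM, hncard1, ?_⟩
  rw [hm3] at hA3eq
  rw [hA3eq, swap12 β (r x₂ x) (r x₂ x), swap23 (r x₂ x) β (r x₂ x)]
end

section
/- Let (X,r) be a finite colored space with |X| = n and a_2(r) = a_3(r) = 4. Suppose there exists a color α with ααα ∈ A_3(r) such that {α} is closed. Then the four colors of r can be labeled α,β,γ,δ (with α as given) so that one of the following holds: (i) A_3(r) = {ααα, αβγ, αγδ, αβδ} and n ≤ 6; (ii) A_3(r) = {ααα, αββ, γγα, βγδ}; (iii) A_3(r) = {ααα, αββ, αβγ, αβδ}. -/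
section MultisetTools
variable {C : Type*}

lemma swap12_s9 (p q s : C) : ({p, q, s} : Multiset C) = {q, p, s} :=
  Multiset.cons_swap p q {s}

lemma swap23_s9 (p q s : C) : ({p, q, s} : Multiset C) = {p, s, q} :=
  congrArg (p ::ₘ ·) (Multiset.cons_swap q s 0)

lemma rot3 (p q s : C) : ({p, q, s} : Multiset C) = {s, p, q} := by
  rw [swap23_s9, swap12_s9]

lemma pair_eq {p q x y : C} (h : ({p, q} : Multiset C) = {x, y}) :
    (p = x ∧ q = y) ∨ (p = y ∧ q = x) := by
  have hp : p = x ∨ p = y := by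
    have : p ∈ ({x, y} : Multiset C) := h ▸ (by simp)
    simpa using this
  rcases hp with rfl | rfl
  · left
    refine ⟨rfl, ?_⟩
    have h2 : ({q} : Multiset C) = {y} := (Multiset.cons_inj_right p).mp h
    simpa using h2
  · right
    refine ⟨rfl, ?_⟩
    rw [show ({x, p} : Multiset C) = {p, x} from Multiset.cons_swap x p 0] at h
    have h2 : ({q} : Multiset C) = {x} := (Multiset.cons_inj_right p).mp h
    simpa using h2

lemma triple_perm {p q s x y z : C} (h : ({p, q, s} : Multiset C) = {x, y, z}) :
    (p = x ∧ q = y ∧ s = z) ∨ (p = x ∧ q = z ∧ s = y) ∨ (p = y ∧ q = x ∧ s = z) ∨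
    (p = y ∧ q = z ∧ s = x) ∨ (p = z ∧ q = x ∧ s = y) ∨ (p = z ∧ q = y ∧ s = x) := by
  have hp : p = x ∨ p = y ∨ p = z := by
    have : p ∈ ({x, y, z} : Multiset C) := h ▸ (by simp)
    simpa using this
  rcases hp with rfl | rfl | rfl
  · have h2 : ({q, s} : Multiset C) = {y, z} := (Multiset.cons_inj_right p).mp h
    rcases pair_eq h2 with ⟨h3, h4⟩ | ⟨h3, h4⟩
    · exact Or.inl ⟨rfl, h3, h4⟩
    · exact Or.inr (Or.inl ⟨rfl, h3, h4⟩)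
  · rw [swap12_s9 x p z] at h
    have h2 : ({q, s} : Multiset C) = {x, z} := (Multiset.cons_inj_right p).mp h
    rcases pair_eq h2 with ⟨h3, h4⟩ | ⟨h3, h4⟩
    · exact Or.inr (Or.inr (Or.inl ⟨rfl, h3, h4⟩))
    · exact Or.inr (Or.inr (Or.inr (Or.inl ⟨rfl, h3, h4⟩)))
  · rw [rot3 x y p] at h
    have h2 : ({q, s} : Multiset C) = {x, y} := (Multiset.cons_inj_right p).mp h
    rcases pair_eq h2 with ⟨h3, h4⟩ | ⟨h3, h4⟩
    · exact Or.inr (Or.inr (Or.inr (Or.inr (Or.inl ⟨rfl, h3, h4⟩))))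
    · exact Or.inr (Or.inr (Or.inr (Or.inr (Or.inr ⟨rfl, h3, h4⟩))))

lemma mid_alpha {α P Q c d : C} (hP : P ≠ α) (hQ : Q ≠ α) (hc : c ≠ α) (hd : d ≠ α)
    (h : ({P, α, Q} : Multiset C) = {α, c, d}) : (P = c ∧ Q = d) ∨ (P = d ∧ Q = c) := by
  rcases triple_perm h with ⟨h1, h2, h3⟩ | ⟨h1, h2, h3⟩ | ⟨h1, h2, h3⟩ | ⟨h1, h2, h3⟩ |
    ⟨h1, h2, h3⟩ | ⟨h1, h2, h3⟩
  · exact absurd h1 hP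
  · exact absurd h1 hP
  · exact Or.inl ⟨h1, h3⟩
  · exact absurd h2.symm hd
  · exact Or.inr ⟨h1, h3⟩
  · exact absurd h2.symm hc

end MultisetTools

section
variable {X C : Type*} {r : X → X → C} {α : C}

lemma tri_mem {x y z : X} (hxy : x ≠ y) (hyz : y ≠ z) (hxz : x ≠ z) :
    ({r x y, r y z, r x z} : Multiset C) ∈ A3 r := ⟨x, y, z, hxy, hyz, hxz, rfl⟩

lemma edge_mem {x y : X} (hxy : x ≠ y) : r x y ∈ colorIm r := ⟨x, y, hxy, rfl⟩

lemma A3_colors {m : Multiset C} (hm : m ∈ A3 r) {c : C} (hc : c ∈ m) : c ∈ colorIm r := by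
  obtain ⟨x, y, z, hxy, hyz, hxz, rfl⟩ := hm
  simp only [Multiset.insert_eq_cons, Multiset.mem_cons, Multiset.mem_singleton] at hc
  rcases hc with rfl | rfl | rfl
  · exact edge_mem hxy
  · exact edge_mem hyz
  · exact edge_mem hxz

/-- the `α`-clique of `u` -/
def Kc (r : X → X → C) (α : C) (u : X) : Set X := {t | t = u ∨ r u t = α}

variable (hsym : ∀ x y, r x y = r y x)
variable (htr : ∀ p q s : X, p ≠ s → r p q = α → r q s = α → r p s = α)

lemma Kc_self (u : X) : u ∈ Kc r α u := Or.inl rfl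

include hsym htr in
lemma Kc_edge {u p q : X} (hp : p ∈ Kc r α u) (hq : q ∈ Kc r α u) (hpq : p ≠ q) :
    r p q = α := by
  rcases hp with rfl | hp
  · rcases hq with rfl | hq
    · exact absurd rfl hpq
    · exact hq
  · rcases hq with rfl | hq
    · rw [hsym]; exact hp
    · exact htr p u q hpq (by rw [hsym]; exact hp) hq

include hsym htr in
lemma Kc_out {u p z : X} (hp : p ∈ Kc r α u) (hz : z ∉ Kc r α u) :
    z ≠ p ∧ r z p ≠ α := by
  constructor
  · rintro rfl; exact hz hp
  · intro hzp
    apply hz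
    rcases hp with rfl | hp
    · exact Or.inr (by rw [hsym]; exact hzp)
    · right
      have hzu : z ≠ u := fun h => hz (Or.inl h)
      exact htr u p z (fun h => hzu h.symm) hp (by rw [hsym]; exact hzp)

omit hsym htr in
lemma third_point {u v w : X} (huv : u ≠ v) (hvw : v ≠ w) (huw : u ≠ w) (x y : X) :
    ∃ t : X, t ≠ x ∧ t ≠ y := by
  by_cases hu : u ≠ x ∧ u ≠ y
  · exact ⟨u, hu⟩
  by_cases hv : v ≠ x ∧ v ≠ y
  · exact ⟨v, hv⟩
  by_cases hw : w ≠ x ∧ w ≠ y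
  · exact ⟨w, hw⟩
  exfalso
  have hu' : u = x ∨ u = y := by
    rcases not_and_or.mp hu with h | h
    exacts [Or.inl (not_not.mp h), Or.inr (not_not.mp h)]
  have hv' : v = x ∨ v = y := by
    rcases not_and_or.mp hv with h | h
    exacts [Or.inl (not_not.mp h), Or.inr (not_not.mp h)]
  have hw' : w = x ∨ w = y := by
    rcases not_and_or.mp hw with h | h
    exacts [Or.inl (not_not.mp h), Or.inr (not_not.mp h)]
  rcases hu' with rfl | rfl <;> rcases hv' with rfl | rfl <;> rcases hw' with rfl | rfl <;>
    simp_all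

omit htr in
include hsym in
lemma color_in_tri {u v w : X} (huv : u ≠ v) (hvw : v ≠ w) (huw : u ≠ w)
    {c : C} (hc : c ∈ colorIm r) : ∃ m ∈ A3 r, c ∈ m := by
  obtain ⟨x, y, hxy, rfl⟩ := hc
  obtain ⟨t, htx, hty⟩ := third_point huv hvw huw x y
  refine ⟨{r x y, r y t, r x t}, tri_mem hxy (Ne.symm hty) (Ne.symm htx), by simp⟩

include hsym in
lemma pick_pair {u v w : X} (huv : u ≠ v) (hvw : v ≠ w) (huw : u ≠ w)
    (ruv : r u v = α) (rvw : r v w = α) (ruw : r u w = α)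
    {x z : X} (hxz : x ≠ z) (hne : r x z ≠ α) :
    ∃ p q : X, p ≠ q ∧ p ≠ x ∧ p ≠ z ∧ q ≠ x ∧ q ≠ z ∧ r p q = α := by
  have key : ∀ p q : X, (p = u ∨ p = v ∨ p = w) → (q = u ∨ q = v ∨ q = w) → p ≠ q →
      r p q = α := by
    rintro p q (rfl | rfl | rfl) (rfl | rfl | rfl) hpq <;>
      first
        | exact absurd rfl hpq
        | assumption
        | (rw [hsym]; assumption)
  by_cases hx : x = u ∨ x = v ∨ x = w
  · have hz : ¬(z = u ∨ z = v ∨ z = w) := by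
      intro hzm
      exact hne (key x z hx hzm hxz)
    push_neg at hz
    obtain ⟨hz1, hz2, hz3⟩ := hz
    rcases hx with rfl | rfl | rfl
    · exact ⟨v, w, hvw, Ne.symm huv, fun h => hz2 h.symm, Ne.symm huw, fun h => hz3 h.symm, rvw⟩
    · exact ⟨u, w, huw, huv, fun h => hz1 h.symm, Ne.symm hvw, fun h => hz3 h.symm, ruw⟩
    · exact ⟨u, v, huv, huw, fun h => hz1 h.symm, hvw, fun h => hz2 h.symm, ruv⟩
  · push_neg at hx
    obtain ⟨hx1, hx2, hx3⟩ := hx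
    by_cases hz : z = u ∨ z = v ∨ z = w
    · rcases hz with rfl | rfl | rfl
      · exact ⟨v, w, hvw, fun h => hx2 h.symm, Ne.symm huv, fun h => hx3 h.symm, Ne.symm huw, rvw⟩
      · exact ⟨u, w, huw, fun h => hx1 h.symm, huv, fun h => hx3 h.symm, Ne.symm hvw, ruw⟩
      · exact ⟨u, v, huv, fun h => hx1 h.symm, huw, fun h => hx2 h.symm, hvw, ruv⟩
    · push_neg at hz
      obtain ⟨hz1, hz2, hz3⟩ := hz
      exact ⟨u, v, huv, fun h => hx1 h.symm, fun h => hz1 h.symm, fun h => hx2 h.symm,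
        fun h => hz2 h.symm, ruv⟩

include hsym htr in
lemma U1 {c d : C} (hcα : c ≠ α) (hdα : d ≠ α) (hc : c ∈ colorIm r)
    (honly : ∀ m ∈ A3 r, c ∈ m → m = {α, c, d})
    {ρ : C} (hρ : ρ ∈ colorIm r) :
    ρ = α ∨ ρ = c ∨ ρ = d ∨ ({α, d, ρ} : Multiset C) ∈ A3 r := by
  obtain ⟨x, z, hxz, hc'⟩ := hc
  have pairf : ∀ t, t ≠ x → t ≠ z → (r x t = α ∧ r z t = d) ∨ (r x t = d ∧ r z t = α) := by
    intro t htx htz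
    have hm : ({r x z, r z t, r x t} : Multiset C) ∈ A3 r :=
      tri_mem hxz (fun h => htz h.symm) (fun h => htx h.symm)
    have heq := honly _ hm (by rw [hc']; simp)
    rw [hc', swap12_s9 α c d] at heq
    have hpq := pair_eq ((Multiset.cons_inj_right c).mp heq)
    tauto
  obtain ⟨s, t, hst, hρ'⟩ := hρ
  by_cases hsx : s = x
  · subst hsx
    by_cases htz : t = z
    · subst htz
      right; left; rw [← hρ']; exact hc'
    · rcases pairf t (Ne.symm hst) htz with ⟨h1, _⟩ | ⟨h1, _⟩
      · left; rw [← hρ']; exact h1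
      · right; right; left; rw [← hρ']; exact h1
  · by_cases hsz : s = z
    · subst hsz
      by_cases htx : t = x
      · subst htx
        right; left; rw [← hρ', hsym]; exact hc'
      · rcases pairf t htx (Ne.symm hst) with ⟨_, h2⟩ | ⟨_, h2⟩
        · right; right; left; rw [← hρ']; exact h2
        · left; rw [← hρ']; exact h2
    · by_cases htx : t = x
      · subst htx
        rcases pairf s hsx hsz with ⟨h1, _⟩ | ⟨h1, _⟩
        · left; rw [← hρ', hsym]; exact h1
        · right; right; left; rw [← hρ', hsym]; exact h1
      · by_cases htz : t = z
        · subst htz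
          rcases pairf s hsx hsz with ⟨_, h2⟩ | ⟨_, h2⟩
          · right; right; left; rw [← hρ', hsym]; exact h2
          · left; rw [← hρ', hsym]; exact h2
        · rcases pairf s hsx hsz with ⟨hxs, hzs⟩ | ⟨hxs, hzs⟩ <;>
            rcases pairf t htx htz with ⟨hxt, hzt⟩ | ⟨hxt, hzt⟩
          · left
            rw [← hρ']
            exact htr s x t hst (by rw [hsym]; exact hxs) hxt
          · -- r x s = α, r x t = d, triangle x s t : {α, ρ, d}
            right; right; right
            have hm : ({r x s, r s t, r x t} : Multiset C) ∈ A3 r :=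
              tri_mem (fun h => hsx h.symm) hst (fun h => htx h.symm)
            rw [hxs, hρ', hxt] at hm
            rwa [show ({α, ρ, d} : Multiset C) = {α, d, ρ} from swap23_s9 α ρ d] at hm
          · right; right; right
            have hm : ({r x t, r t s, r x s} : Multiset C) ∈ A3 r :=
              tri_mem (fun h => htx h.symm) (Ne.symm hst) (fun h => hsx h.symm)
            rw [hxt, hsym t s, hρ', hxs] at hm
            rwa [show ({α, ρ, d} : Multiset C) = {α, d, ρ} from swap23_s9 α ρ d] at hm
          · left
            rw [← hρ']
            exact htr s z t hst (by rw [hsym]; exact hzs) hzt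

include hsym htr in
lemma U2 {c d : C} (hcα : c ≠ α) (hdα : d ≠ α) (hc : c ∈ colorIm r)
    (honly : ∀ m ∈ A3 r, c ∈ m → m = {α, c, d})
    (hdd : ({α, d, d} : Multiset C) ∉ A3 r)
    {u v w : X} (huv : u ≠ v) (hvw : v ≠ w) (huw : u ≠ w)
    (ruv : r u v = α) (rvw : r v w = α) (ruw : r u w = α) : False := by
  obtain ⟨x, z, hxz, hc'⟩ := hc
  have pairf : ∀ t, t ≠ x → t ≠ z → (r x t = α ∧ r z t = d) ∨ (r x t = d ∧ r z t = α) := by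
    intro t htx htz
    have hm : ({r x z, r z t, r x t} : Multiset C) ∈ A3 r :=
      tri_mem hxz (fun h => htz h.symm) (fun h => htx h.symm)
    have heq := honly _ hm (by rw [hc']; simp)
    rw [hc', swap12_s9 α c d] at heq
    have hpq := pair_eq ((Multiset.cons_inj_right c).mp heq)
    tauto
  obtain ⟨p, q, hpq, hpx, hpz, hqx, hqz, rpq⟩ :=
    pick_pair hsym huv hvw huw ruv rvw ruw hxz (by rw [hc']; exact hcα)
  rcases pairf p hpx hpz with ⟨h1, h2⟩ | ⟨h1, h2⟩ <;>
    rcases pairf q hqx hqz with ⟨h3, h4⟩ | ⟨h3, h4⟩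
  · -- r z p = d, r z q = d : triangle z p q
    apply hdd
    have hm : ({r z p, r p q, r z q} : Multiset C) ∈ A3 r :=
      tri_mem (Ne.symm hpz) hpq (Ne.symm hqz)
    rw [h2, rpq, h4] at hm
    rwa [show ({d, α, d} : Multiset C) = {α, d, d} from swap12_s9 d α d] at hm
  · -- r x p = α, r x q = d but htr gives r x q = α
    exact hdα ((htr x p q (fun h => hqx h.symm) h1 rpq).symm.trans h3).symm
  · exact hdα ((htr x q p (fun h => hpx h.symm) h3 (by rw [hsym]; exact rpq)).symm.trans h1).symm
  · apply hdd
    have hm : ({r x p, r p q, r x q} : Multiset C) ∈ A3 r :=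
      tri_mem (fun h => hpx h.symm) hpq (fun h => hqx h.symm)
    rw [h1, rpq, h3] at hm
    rwa [show ({d, α, d} : Multiset C) = {α, d, d} from swap12_s9 d α d] at hm

end


lemma four_of_ncard {T : Type*} {S : Set T} (h : S.ncard = 4) {x : T} (hx : x ∈ S) :
    ∃ p q s, x ≠ p ∧ x ≠ q ∧ x ≠ s ∧ p ≠ q ∧ p ≠ s ∧ q ≠ s ∧ S = {x, p, q, s} := by
  classical
  have hfin : S.Finite := by
    by_contra hinf
    rw [Set.Infinite.ncard hinf] at h
    omega
  have hcard : hfin.toFinset.card = 4 := by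
    rw [← Set.ncard_eq_toFinset_card S hfin]; exact h
  have hxF : x ∈ hfin.toFinset := hfin.mem_toFinset.mpr hx
  have hE : (hfin.toFinset.erase x).card = 3 := by
    rw [Finset.card_erase_of_mem hxF, hcard]
  obtain ⟨p, q, s, hpq, hps, hqs, hEeq⟩ := Finset.card_eq_three.mp hE
  have hpE : p ∈ hfin.toFinset.erase x := by rw [hEeq]; simp
  have hqE : q ∈ hfin.toFinset.erase x := by rw [hEeq]; simp
  have hsE : s ∈ hfin.toFinset.erase x := by rw [hEeq]; simp
  refine ⟨p, q, s, (Finset.ne_of_mem_erase hpE).symm, (Finset.ne_of_mem_erase hqE).symm,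
    (Finset.ne_of_mem_erase hsE).symm, hpq, hps, hqs, ?_⟩
  ext a
  constructor
  · intro ha
    have haF : a ∈ hfin.toFinset := hfin.mem_toFinset.mpr ha
    by_cases hax : a = x
    · simp [hax]
    · have : a ∈ hfin.toFinset.erase x := Finset.mem_erase.mpr ⟨hax, haF⟩
      rw [hEeq] at this
      simp only [Finset.mem_insert, Finset.mem_singleton] at this
      simp only [Set.mem_insert_iff, Set.mem_singleton_iff]
      tauto
  · intro ha
    simp only [Set.mem_insert_iff, Set.mem_singleton_iff] at ha
    rcases ha with rfl | rfl | rfl | rfl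
    · exact hx
    · exact hfin.mem_toFinset.mp (Finset.mem_of_mem_erase hpE)
    · exact hfin.mem_toFinset.mp (Finset.mem_of_mem_erase hqE)
    · exact hfin.mem_toFinset.mp (Finset.mem_of_mem_erase hsE)

lemma eq_of_four {T : Type*} {S : Set T} (h : S.ncard = 4) {p q s t : T}
    (hp : p ∈ S) (hq : q ∈ S) (hs : s ∈ S) (ht : t ∈ S)
    (h1 : p ≠ q) (h2 : p ≠ s) (h3 : p ≠ t) (h4 : q ≠ s) (h5 : q ≠ t) (h6 : s ≠ t) :
    S = {p, q, s, t} := by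
  classical
  have hfin : S.Finite := by
    by_contra hinf
    rw [Set.Infinite.ncard hinf] at h
    omega
  have hsub : ({p, q, s, t} : Set T) ⊆ S := by
    intro a ha
    simp only [Set.mem_insert_iff, Set.mem_singleton_iff] at ha
    rcases ha with rfl | rfl | rfl | rfl <;> assumption
  have hco : ({p, q, s, t} : Set T) = ↑({p, q, s, t} : Finset T) := by simp
  have hn : ({p, q, s, t} : Set T).ncard = 4 := by
    rw [hco, Set.ncard_coe_finset]
    rw [Finset.card_insert_of_notMem (by simp [h1, h2, h3]),
      Finset.card_insert_of_notMem (by simp [h4, h5]),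
      Finset.card_insert_of_notMem (by simp [h6]), Finset.card_singleton]
  exact (Set.eq_of_subset_of_ncard_le hsub (by rw [h, hn]) hfin).symm

lemma no_eq {C : Type*} {c : C} {m₁ m₂ : Multiset C} (h : m₁ = m₂) (hc : c ∈ m₁)
    (hnc : c ∉ m₂) : False := hnc (h ▸ hc)

section
variable {X C : Type*} {r : X → X → C} {α : C}
variable (hsym : ∀ x y, r x y = r y x)
variable (htr : ∀ p q s : X, p ≠ s → r p q = α → r q s = α → r p s = α)

include hsym htr in
lemma U3 {a b e : C} (hαa : α ≠ a) (hαb : α ≠ b) (hαe : α ≠ e)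
    (hab : a ≠ b) (hae : a ≠ e) (hbe : b ≠ e)
    (hbc : b ∈ colorIm r) (hec : e ∈ colorIm r)
    {u v w : X} (huv : u ≠ v) (hvw : v ≠ w) (huw : u ≠ w)
    (ruv : r u v = α) (rvw : r v w = α) (ruw : r u w = α)
    {T : Multiset C}
    (hA3 : A3 r = {({α, α, α} : Multiset C), {α, a, a}, {α, b, e}, T})
    (hTα : α ∉ T) : False := by
  have hu : u ∈ Kc r α u := Kc_self u
  have hv : v ∈ Kc r α u := Or.inr ruv
  have hw : w ∈ Kc r α u := Or.inr ruw
  have trich : ∀ z ∉ Kc r α u, ∀ p ∈ Kc r α u, ∀ q ∈ Kc r α u, p ≠ q →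
      (r z p = a ∧ r z q = a) ∨ (r z p = b ∧ r z q = e) ∨ (r z p = e ∧ r z q = b) := by
    intro z hz p hp q hq hpq
    obtain ⟨hzp, hzpα⟩ := Kc_out hsym htr hp hz
    obtain ⟨hzq, hzqα⟩ := Kc_out hsym htr hq hz
    have hm : ({r z p, r p q, r z q} : Multiset C) ∈ A3 r := tri_mem hzp hpq hzq
    rw [Kc_edge hsym htr hp hq hpq] at hm
    rw [hA3] at hm
    simp only [Set.mem_insert_iff, Set.mem_singleton_iff] at hm
    rcases hm with h | h | h | h
    · exfalso
      apply hzpα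
      have hmem : r z p ∈ ({α, α, α} : Multiset C) := h ▸ (by simp)
      simpa using hmem
    · rcases mid_alpha hzpα hzqα (Ne.symm hαa) (Ne.symm hαa) h with ⟨h1, h2⟩ | ⟨h1, h2⟩ <;>
        exact Or.inl ⟨h1, h2⟩
    · rcases mid_alpha hzpα hzqα (Ne.symm hαb) (Ne.symm hαe) h with ⟨h1, h2⟩ | ⟨h1, h2⟩
      · exact Or.inr (Or.inl ⟨h1, h2⟩)
      · exact Or.inr (Or.inr ⟨h1, h2⟩)
    · exact absurd (h ▸ (by simp : α ∈ ({r z p, α, r z q} : Multiset C))) hTα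
  have step1 : ∀ z ∉ Kc r α u, ∀ p ∈ Kc r α u, r z p = a := by
    intro z hz p hp
    have hzu : r z u = a := by
      rcases trich z hz u hu v hv huv with ⟨h1, h2⟩ | ⟨h1, h2⟩ | ⟨h1, h2⟩
      · exact h1
      · rcases trich z hz u hu w hw huw with ⟨h3, h4⟩ | ⟨h3, h4⟩ | ⟨h3, h4⟩
        · exact absurd (h1.symm.trans h3) (Ne.symm hab)
        · rcases trich z hz v hv w hw hvw with ⟨h5, h6⟩ | ⟨h5, h6⟩ | ⟨h5, h6⟩
          · exact absurd (h2.symm.trans h5) (Ne.symm hae)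
          · exact absurd (h2.symm.trans h5) (Ne.symm hbe)
          · exact absurd (h4.symm.trans h6) (Ne.symm hbe)
        · exact absurd (h1.symm.trans h3) hbe
      · rcases trich z hz u hu w hw huw with ⟨h3, h4⟩ | ⟨h3, h4⟩ | ⟨h3, h4⟩
        · exact absurd (h1.symm.trans h3) (Ne.symm hae)
        · exact absurd (h1.symm.trans h3) (Ne.symm hbe)
        · rcases trich z hz v hv w hw hvw with ⟨h5, h6⟩ | ⟨h5, h6⟩ | ⟨h5, h6⟩
          · exact absurd (h2.symm.trans h5) (Ne.symm hab)
          · exact absurd (h4.symm.trans h6) hbe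
          · exact absurd (h2.symm.trans h5) hbe
    by_cases hpu : p = u
    · rw [hpu]; exact hzu
    rcases trich z hz p hp u hu hpu with ⟨h1, h2⟩ | ⟨h1, h2⟩ | ⟨h1, h2⟩
    · exact h1
    · exact absurd (h2.symm.trans hzu) (Ne.symm hae)
    · exact absurd (h2.symm.trans hzu) (Ne.symm hab)
  have edgeT : ∀ x z : X, x ≠ z → (r x z = b ∨ r x z = e) → T = {r x z, a, a} := by
    intro x z hxz hc
    have hcα : r x z ≠ α := by
      rcases hc with h | h <;> rw [h]
      · exact Ne.symm hαb
      · exact Ne.symm hαe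
    have hxK : x ∉ Kc r α u := by
      intro hxK
      have hzK : z ∉ Kc r α u := fun hzK => hcα (Kc_edge hsym htr hxK hzK hxz)
      have hval := step1 z hzK x hxK
      rw [hsym] at hval
      rcases hc with h | h
      · exact hab (h.symm.trans hval).symm
      · exact hae (h.symm.trans hval).symm
    have hzK : z ∉ Kc r α u := by
      intro hzK
      have hval := step1 x hxK z hzK
      rcases hc with h | h
      · exact hab (hval.symm.trans h)
      · exact hae (hval.symm.trans h)
    obtain ⟨hzu, _⟩ := Kc_out hsym htr hu hzK
    obtain ⟨hxu, _⟩ := Kc_out hsym htr hu hxK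
    have hm : ({r x z, r z u, r x u} : Multiset C) ∈ A3 r := tri_mem hxz hzu hxu
    rw [step1 z hzK u hu, step1 x hxK u hu, hA3] at hm
    simp only [Set.mem_insert_iff, Set.mem_singleton_iff] at hm
    rcases hm with h | h | h | h
    · exfalso
      apply hcα
      have hmem : r x z ∈ ({α, α, α} : Multiset C) := h ▸ (by simp)
      simpa using hmem
    · exfalso
      have : α ∈ ({r x z, a, a} : Multiset C) := h ▸ (by simp)
      simp only [Multiset.insert_eq_cons, Multiset.mem_cons, Multiset.mem_singleton] at this
      rcases this with h' | h' | h'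
      · exact hcα h'.symm
      · exact hαa h'
      · exact hαa h'
    · exfalso
      have : α ∈ ({r x z, a, a} : Multiset C) := h ▸ (by simp)
      simp only [Multiset.insert_eq_cons, Multiset.mem_cons, Multiset.mem_singleton] at this
      rcases this with h' | h' | h'
      · exact hcα h'.symm
      · exact hαa h'
      · exact hαa h'
    · exact h.symm
  obtain ⟨x, z, hxz, hb'⟩ := hbc
  obtain ⟨x', z', hxz', he'⟩ := hec
  have h1 := edgeT x z hxz (Or.inl hb')
  have h2 := edgeT x' z' hxz' (Or.inr he')
  rw [hb'] at h1
  rw [he'] at h2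
  have : b ∈ ({e, a, a} : Multiset C) := (h1.symm.trans h2) ▸ (by simp)
  simp only [Multiset.insert_eq_cons, Multiset.mem_cons, Multiset.mem_singleton] at this
  rcases this with h' | h' | h'
  · exact hbe h'
  · exact hab h'.symm
  · exact hab h'.symm

end

section
variable {X C : Type*} {r : X → X → C} {α : C}
variable (hsym : ∀ x y, r x y = r y x)
variable (htr : ∀ p q s : X, p ≠ s → r p q = α → r q s = α → r p s = α)

include hsym htr in
lemma U4 {a b e : C} (hαa : α ≠ a) (hαb : α ≠ b) (hαe : α ≠ e)
    (hab : a ≠ b) (hae : a ≠ e) (hbe : b ≠ e)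
    (hcim : colorIm r = {α, a, b, e})
    {u v w : X} (huv : u ≠ v) (hvw : v ≠ w) (huw : u ≠ w)
    (ruv : r u v = α) (rvw : r v w = α) (ruw : r u w = α)
    {T : Multiset C}
    (hA3 : A3 r = {({α, α, α} : Multiset C), {α, a, a}, {α, a, b}, T})
    (hTα : α ∉ T) : False := by
  have hu : u ∈ Kc r α u := Kc_self u
  have hv : v ∈ Kc r α u := Or.inr ruv
  have hw : w ∈ Kc r α u := Or.inr ruw
  have trich : ∀ z ∉ Kc r α u, ∀ p ∈ Kc r α u, ∀ q ∈ Kc r α u, p ≠ q →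
      (r z p = a ∧ r z q = a) ∨ (r z p = a ∧ r z q = b) ∨ (r z p = b ∧ r z q = a) := by
    intro z hz p hp q hq hpq
    obtain ⟨hzp, hzpα⟩ := Kc_out hsym htr hp hz
    obtain ⟨hzq, hzqα⟩ := Kc_out hsym htr hq hz
    have hm : ({r z p, r p q, r z q} : Multiset C) ∈ A3 r := tri_mem hzp hpq hzq
    rw [Kc_edge hsym htr hp hq hpq] at hm
    rw [hA3] at hm
    simp only [Set.mem_insert_iff, Set.mem_singleton_iff] at hm
    rcases hm with h | h | h | h
    · exfalso
      apply hzpα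
      have hmem : r z p ∈ ({α, α, α} : Multiset C) := h ▸ (by simp)
      simpa using hmem
    · rcases mid_alpha hzpα hzqα (Ne.symm hαa) (Ne.symm hαa) h with ⟨h1, h2⟩ | ⟨h1, h2⟩ <;>
        exact Or.inl ⟨h1, h2⟩
    · rcases mid_alpha hzpα hzqα (Ne.symm hαa) (Ne.symm hαb) h with ⟨h1, h2⟩ | ⟨h1, h2⟩
      · exact Or.inr (Or.inl ⟨h1, h2⟩)
      · exact Or.inr (Or.inr ⟨h1, h2⟩)
    · exact absurd (h ▸ (by simp : α ∈ ({r z p, α, r z q} : Multiset C))) hTα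
  have step1 : ∀ z ∉ Kc r α u, ∀ p ∈ Kc r α u, r z p = a ∨ r z p = b := by
    intro z hz p hp
    by_cases hpu : p = u
    · subst hpu
      rcases trich z hz p hp v hv huv with ⟨h, _⟩ | ⟨h, _⟩ | ⟨h, _⟩
      · exact Or.inl h
      · exact Or.inl h
      · exact Or.inr h
    · rcases trich z hz p hp u hu hpu with ⟨h, _⟩ | ⟨h, _⟩ | ⟨h, _⟩
      · exact Or.inl h
      · exact Or.inl h
      · exact Or.inr h
  have noBB : ∀ z ∉ Kc r α u, ∀ p ∈ Kc r α u, ∀ q ∈ Kc r α u, p ≠ q →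
      r z p = b → r z q = b → False := by
    intro z hz p hp q hq hpq h1 h2
    rcases trich z hz p hp q hq hpq with ⟨h3, h4⟩ | ⟨h3, h4⟩ | ⟨h3, h4⟩
    · exact hab (h3.symm.trans h1)
    · exact hab (h3.symm.trans h1)
    · exact hab (h4.symm.trans h2)
  have hecol : e ∈ colorIm r := by rw [hcim]; simp
  obtain ⟨x, z, hxz, he'⟩ := hecol
  have heα : r x z ≠ α := by rw [he']; exact Ne.symm hαe
  have hxK : x ∉ Kc r α u := by
    intro hxK
    have hzK : z ∉ Kc r α u := fun hzK => heα (Kc_edge hsym htr hxK hzK hxz)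
    rcases step1 z hzK x hxK with h | h <;> rw [hsym] at h
    · exact (Ne.symm hae) (he'.symm.trans h)
    · exact (Ne.symm hbe) (he'.symm.trans h)
  have hzK : z ∉ Kc r α u := by
    intro hzK
    rcases step1 x hxK z hzK with h | h
    · exact (Ne.symm hae) (he'.symm.trans h)
    · exact (Ne.symm hbe) (he'.symm.trans h)
  obtain ⟨t, ht, hxa, hza⟩ : ∃ t ∈ Kc r α u, r x t = a ∧ r z t = a := by
    by_cases h1 : r x u = a
    · by_cases h2 : r z u = a
      · exact ⟨u, hu, h1, h2⟩
      · have h2' : r z u = b := (step1 z hzK u hu).resolve_left h2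
        have hzv : r z v = a := by
          rcases step1 z hzK v hv with h | h
          · exact h
          · exact (noBB z hzK u hu v hv huv h2' h).elim
        have hzw : r z w = a := by
          rcases step1 z hzK w hw with h | h
          · exact h
          · exact (noBB z hzK u hu w hw huw h2' h).elim
        by_cases h3 : r x v = a
        · exact ⟨v, hv, h3, hzv⟩
        · have h3' : r x v = b := (step1 x hxK v hv).resolve_left h3
          rcases step1 x hxK w hw with h4 | h4
          · exact ⟨w, hw, h4, hzw⟩
          · exact (noBB x hxK v hv w hw hvw h3' h4).elim
    · have h1' : r x u = b := (step1 x hxK u hu).resolve_left h1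
      have hxv : r x v = a := by
        rcases step1 x hxK v hv with h | h
        · exact h
        · exact (noBB x hxK u hu v hv huv h1' h).elim
      have hxw : r x w = a := by
        rcases step1 x hxK w hw with h | h
        · exact h
        · exact (noBB x hxK u hu w hw huw h1' h).elim
      by_cases h2 : r z v = a
      · exact ⟨v, hv, hxv, h2⟩
      · have h2' : r z v = b := (step1 z hzK v hv).resolve_left h2
        rcases step1 z hzK w hw with h3 | h3
        · exact ⟨w, hw, hxw, h3⟩
        · exact (noBB z hzK v hv w hw hvw h2' h3).elim
  obtain ⟨hzt, _⟩ := Kc_out hsym htr ht hzK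
  obtain ⟨hxt, _⟩ := Kc_out hsym htr ht hxK
  have hm : ({r x z, r z t, r x t} : Multiset C) ∈ A3 r := tri_mem hxz hzt hxt
  rw [he', hza, hxa, hA3] at hm
  simp only [Set.mem_insert_iff, Set.mem_singleton_iff] at hm
  have hT : T = {e, a, a} := by
    rcases hm with h | h | h | h
    · exact (no_eq (c := e) h (by simp) (by simp [Ne.symm hαe])).elim
    · exact (no_eq (c := e) h (by simp) (by simp [Ne.symm hαe, Ne.symm hae])).elim
    · exact (no_eq (c := e) h (by simp) (by simp [Ne.symm hαe, Ne.symm hae, Ne.symm hbe])).elim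
    · exact h.symm
  have honly : ∀ m ∈ A3 r, b ∈ m → m = {α, b, a} := by
    intro m hmm hbm
    rw [hA3] at hmm
    simp only [Set.mem_insert_iff, Set.mem_singleton_iff] at hmm
    rcases hmm with h1 | h1 | h1 | h1 <;> rw [h1] at hbm
    · exact absurd (by simpa using hbm) (Ne.symm hαb)
    · exfalso
      rcases (by simpa using hbm : b = α ∨ b = a) with h' | h'
      · exact (Ne.symm hαb) h'
      · exact (Ne.symm hab) h'
    · rw [h1]; exact swap23_s9 α a b
    · exfalso
      rw [hT] at hbm
      rcases (by simpa using hbm : b = e ∨ b = a) with h' | h'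
      · exact hbe h'
      · exact (Ne.symm hab) h'
  have hres := U1 hsym htr (Ne.symm hαb) (Ne.symm hαa) (by rw [hcim]; simp)
    honly (by rw [hcim]; simp : e ∈ colorIm r)
  rcases hres with h' | h' | h' | h'
  · exact hαe h'.symm
  · exact hbe h'.symm
  · exact hae h'.symm
  · rw [hA3] at h'
    simp only [Set.mem_insert_iff, Set.mem_singleton_iff] at h'
    rcases h' with h' | h' | h' | h'
    · exact no_eq (c := e) h' (by simp) (by simp [Ne.symm hαe])
    · exact no_eq (c := e) h' (by simp) (by simp [Ne.symm hαe, Ne.symm hae])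
    · exact no_eq (c := e) h' (by simp) (by simp [Ne.symm hαe, Ne.symm hae, Ne.symm hbe])
    · rw [hT] at h'
      exact no_eq (c := α) h' (by simp) (by simp [hαe, hαa])

end

def Concl {X C : Type*} [Fintype X] (r : X → X → C) (α : C) : Prop :=
  ∃ β γ δ : C, (α ≠ β ∧ α ≠ γ ∧ α ≠ δ ∧ β ≠ γ ∧ β ≠ δ ∧ γ ≠ δ) ∧
    colorIm r = {α, β, γ, δ} ∧
    ((A3 r = {({α, α, α} : Multiset C), ({α, β, γ} : Multiset C),
        ({α, γ, δ} : Multiset C), ({α, β, δ} : Multiset C)} ∧ Fintype.card X ≤ 6) ∨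
      A3 r = {({α, α, α} : Multiset C), ({α, β, β} : Multiset C),
        ({γ, γ, α} : Multiset C), ({β, γ, δ} : Multiset C)} ∨
      A3 r = {({α, α, α} : Multiset C), ({α, β, β} : Multiset C),
        ({α, β, γ} : Multiset C), ({α, β, δ} : Multiset C)})

section
variable {X C : Type*} {r : X → X → C} {α : C}
variable (hsym : ∀ x y, r x y = r y x)
variable (htr : ∀ p q s : X, p ≠ s → r p q = α → r q s = α → r p s = α)
variable (htwo : ∀ c : C, ({α, α, c} : Multiset C) ∈ A3 r → c = α)

omit hsym htr in
include htwo in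
lemma mixed_shape {T : Multiset C} (hT : T ∈ A3 r) (hTα : α ∈ T)
    (hT1 : T ≠ {α, α, α}) :
    ∃ p q : C, p ≠ α ∧ q ≠ α ∧ p ∈ colorIm r ∧ q ∈ colorIm r ∧ T = {α, p, q} := by
  obtain ⟨x, y, z, hxy, hyz, hxz, hTeq⟩ := hT
  have m1 : r x y ∈ colorIm r := edge_mem hxy
  have m2 : r y z ∈ colorIm r := edge_mem hyz
  have m3 : r x z ∈ colorIm r := edge_mem hxz
  have key : ∀ p q : C, p ∈ colorIm r → q ∈ colorIm r → T = {α, p, q} →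
      ∃ p q : C, p ≠ α ∧ q ≠ α ∧ p ∈ colorIm r ∧ q ∈ colorIm r ∧ T = {α, p, q} := by
    intro p q hp hq hpq
    by_cases hpα : p = α
    · exfalso
      have hTin : T ∈ A3 r := by rw [hTeq]; exact tri_mem hxy hyz hxz
      rw [hpq, hpα] at hTin
      have hq' : q = α := htwo q hTin
      exact hT1 (by rw [hpq, hpα, hq'])
    · by_cases hqα : q = α
      · exfalso
        have hTin : T ∈ A3 r := by rw [hTeq]; exact tri_mem hxy hyz hxz
        rw [hpq, hqα, swap23_s9 α p α] at hTin
        have hp' : p = α := htwo p hTin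
        exact hpα hp'
      · exact ⟨p, q, hpα, hqα, hp, hq, hpq⟩
  have hαm : α = r x y ∨ α = r y z ∨ α = r x z := by
    rw [hTeq] at hTα
    simpa using hTα
  rcases hαm with h | h | h
  · exact key (r y z) (r x z) m2 m3 (by rw [hTeq, ← h])
  · exact key (r x y) (r x z) m1 m3 (by rw [hTeq, ← h, swap12_s9])
  · exact key (r x y) (r y z) m1 m2 (by rw [hTeq, ← h, rot3])

end

section
variable {X C : Type*} {r : X → X → C} {α : C}
variable (hsym : ∀ x y, r x y = r y x)
variable (htr : ∀ p q s : X, p ≠ s → r p q = α → r q s = α → r p s = α)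
variable (htwo : ∀ c : C, ({α, α, c} : Multiset C) ∈ A3 r → c = α)

include hsym htr htwo in
lemma caseL2 [Fintype X] {a b e : C}
    (hαa : α ≠ a) (hαb : α ≠ b) (hαe : α ≠ e) (hab : a ≠ b) (hae : a ≠ e) (hbe : b ≠ e)
    (hcim : colorIm r = {α, a, b, e})
    {u v w : X} (huv : u ≠ v) (hvw : v ≠ w) (huw : u ≠ w)
    (ruv : r u v = α) (rvw : r v w = α) (ruw : r u w = α)
    {T : Multiset C}
    (hA3 : A3 r = {({α, α, α} : Multiset C), {α, a, a}, {α, b, b}, T})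
    (hT1 : T ≠ ({α, α, α} : Multiset C)) (hT2 : T ≠ {α, a, a}) (hT3 : T ≠ {α, b, b})
    (hnle : ({α, e, e} : Multiset C) ∉ A3 r) : Concl r α := by
  have hTA3 : T ∈ A3 r := by rw [hA3]; simp
  have hbcol : b ∈ colorIm r := by rw [hcim]; simp
  have hecol : e ∈ colorIm r := by rw [hcim]; simp
  have hacol : a ∈ colorIm r := by rw [hcim]; simp
  by_cases hTα : α ∈ T
  · exfalso
    obtain ⟨p, q, hpα, hqα, hpc, hqc, hTpq⟩ := mixed_shape htwo hTA3 hTα hT1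
    have hpm : p = a ∨ p = b ∨ p = e := by
      have h' := hpc
      rw [hcim] at h'
      simp only [Set.mem_insert_iff, Set.mem_singleton_iff] at h'
      rcases h' with h' | h' | h' | h'
      · exact absurd h' hpα
      · exact Or.inl h'
      · exact Or.inr (Or.inl h')
      · exact Or.inr (Or.inr h')
    have hqm : q = a ∨ q = b ∨ q = e := by
      have h' := hqc
      rw [hcim] at h'
      simp only [Set.mem_insert_iff, Set.mem_singleton_iff] at h'
      rcases h' with h' | h' | h' | h'
      · exact absurd h' hqα
      · exact Or.inl h'
      · exact Or.inr (Or.inl h')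
      · exact Or.inr (Or.inr h')
    rcases hpm with hp | hp | hp <;> rcases hqm with hq | hq | hq <;> rw [hp, hq] at hTpq
    -- (a,a)
    · exact hT2 hTpq
    -- (a,b) : e appears nowhere
    · obtain ⟨m, hm, hem⟩ := color_in_tri hsym huv hvw huw hecol
      rw [hA3] at hm
      simp only [Set.mem_insert_iff, Set.mem_singleton_iff] at hm
      rcases hm with h | h | h | h <;> rw [h] at hem
      · exact absurd hem (by simp [Ne.symm hαe])
      · exact absurd hem (by simp [Ne.symm hαe, Ne.symm hae])
      · exact absurd hem (by simp [Ne.symm hαe, Ne.symm hbe])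
      · rw [hTpq] at hem
        exact absurd hem (by simp [Ne.symm hαe, Ne.symm hae, Ne.symm hbe])
    -- (a,e) : U1 with c = e, d = a
    · have honly : ∀ m ∈ A3 r, e ∈ m → m = {α, e, a} := by
        intro m hm hem
        rw [hA3] at hm
        simp only [Set.mem_insert_iff, Set.mem_singleton_iff] at hm
        rcases hm with h | h | h | h
        · rw [h] at hem; exact absurd hem (by simp [Ne.symm hαe])
        · rw [h] at hem; exact absurd hem (by simp [Ne.symm hαe, Ne.symm hae])
        · rw [h] at hem; exact absurd hem (by simp [Ne.symm hαe, Ne.symm hbe])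
        · rw [h, hTpq]; exact swap23_s9 α a e
      rcases U1 hsym htr (Ne.symm hαe) (Ne.symm hαa) hecol honly hbcol with h' | h' | h' | h'
      · exact hαb h'.symm
      · exact hbe h'
      · exact hab h'.symm
      · rw [hA3] at h'
        simp only [Set.mem_insert_iff, Set.mem_singleton_iff] at h'
        rcases h' with h | h | h | h
        · exact no_eq (c := b) h (by simp) (by simp [Ne.symm hαb])
        · exact no_eq (c := b) h (by simp) (by simp [Ne.symm hαb, Ne.symm hab])
        · exact no_eq (c := a) h (by simp) (by simp [Ne.symm hαa, hab, Ne.symm hab])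
        · rw [hTpq] at h
          exact no_eq (c := b) h (by simp) (by simp [Ne.symm hαb, Ne.symm hab, hab, hbe])
    -- (b,a)
    · obtain ⟨m, hm, hem⟩ := color_in_tri hsym huv hvw huw hecol
      rw [hA3] at hm
      simp only [Set.mem_insert_iff, Set.mem_singleton_iff] at hm
      rcases hm with h | h | h | h <;> rw [h] at hem
      · exact absurd hem (by simp [Ne.symm hαe])
      · exact absurd hem (by simp [Ne.symm hαe, Ne.symm hae])
      · exact absurd hem (by simp [Ne.symm hαe, Ne.symm hbe])
      · rw [hTpq] at hem
        exact absurd hem (by simp [Ne.symm hαe, Ne.symm hbe, Ne.symm hae])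
    -- (b,b)
    · exact hT3 hTpq
    -- (b,e) : U1 with c = e, d = b
    · have honly : ∀ m ∈ A3 r, e ∈ m → m = {α, e, b} := by
        intro m hm hem
        rw [hA3] at hm
        simp only [Set.mem_insert_iff, Set.mem_singleton_iff] at hm
        rcases hm with h | h | h | h
        · rw [h] at hem; exact absurd hem (by simp [Ne.symm hαe])
        · rw [h] at hem; exact absurd hem (by simp [Ne.symm hαe, Ne.symm hae])
        · rw [h] at hem; exact absurd hem (by simp [Ne.symm hαe, Ne.symm hbe])
        · rw [h, hTpq]; exact swap23_s9 α b e
      rcases U1 hsym htr (Ne.symm hαe) (Ne.symm hαb) hecol honly hacol with h' | h' | h' | h'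
      · exact hαa h'.symm
      · exact hae h'
      · exact hab h'
      · rw [hA3] at h'
        simp only [Set.mem_insert_iff, Set.mem_singleton_iff] at h'
        rcases h' with h | h | h | h
        · exact no_eq (c := a) h (by simp) (by simp [Ne.symm hαa])
        · exact no_eq (c := b) h (by simp) (by simp [Ne.symm hαb, hab, Ne.symm hab])
        · exact no_eq (c := a) h (by simp) (by simp [Ne.symm hαa, hab, Ne.symm hab])
        · rw [hTpq] at h
          exact no_eq (c := a) h (by simp) (by simp [Ne.symm hαa, hab, Ne.symm hab, hae])
    -- (e,a) : U1 with c = e, d = a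
    · have honly : ∀ m ∈ A3 r, e ∈ m → m = {α, e, a} := by
        intro m hm hem
        rw [hA3] at hm
        simp only [Set.mem_insert_iff, Set.mem_singleton_iff] at hm
        rcases hm with h | h | h | h
        · rw [h] at hem; exact absurd hem (by simp [Ne.symm hαe])
        · rw [h] at hem; exact absurd hem (by simp [Ne.symm hαe, Ne.symm hae])
        · rw [h] at hem; exact absurd hem (by simp [Ne.symm hαe, Ne.symm hbe])
        · rw [h, hTpq]
      rcases U1 hsym htr (Ne.symm hαe) (Ne.symm hαa) hecol honly hbcol with h' | h' | h' | h'
      · exact hαb h'.symm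
      · exact hbe h'
      · exact hab h'.symm
      · rw [hA3] at h'
        simp only [Set.mem_insert_iff, Set.mem_singleton_iff] at h'
        rcases h' with h | h | h | h
        · exact no_eq (c := b) h (by simp) (by simp [Ne.symm hαb])
        · exact no_eq (c := b) h (by simp) (by simp [Ne.symm hαb, Ne.symm hab])
        · exact no_eq (c := a) h (by simp) (by simp [Ne.symm hαa, hab, Ne.symm hab])
        · rw [hTpq] at h
          exact no_eq (c := b) h (by simp) (by simp [Ne.symm hαb, hbe, Ne.symm hab, hab])
    -- (e,b) : U1 with c = e, d = b
    · have honly : ∀ m ∈ A3 r, e ∈ m → m = {α, e, b} := by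
        intro m hm hem
        rw [hA3] at hm
        simp only [Set.mem_insert_iff, Set.mem_singleton_iff] at hm
        rcases hm with h | h | h | h
        · rw [h] at hem; exact absurd hem (by simp [Ne.symm hαe])
        · rw [h] at hem; exact absurd hem (by simp [Ne.symm hαe, Ne.symm hae])
        · rw [h] at hem; exact absurd hem (by simp [Ne.symm hαe, Ne.symm hbe])
        · rw [h, hTpq]
      rcases U1 hsym htr (Ne.symm hαe) (Ne.symm hαb) hecol honly hacol with h' | h' | h' | h'
      · exact hαa h'.symm
      · exact hae h'
      · exact hab h'
      · rw [hA3] at h'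
        simp only [Set.mem_insert_iff, Set.mem_singleton_iff] at h'
        rcases h' with h | h | h | h
        · exact no_eq (c := a) h (by simp) (by simp [Ne.symm hαa])
        · exact no_eq (c := b) h (by simp) (by simp [Ne.symm hαb, hab, Ne.symm hab])
        · exact no_eq (c := a) h (by simp) (by simp [Ne.symm hαa, hab, Ne.symm hab])
        · rw [hTpq] at h
          exact no_eq (c := a) h (by simp) (by simp [Ne.symm hαa, hae, hab, Ne.symm hab])
    -- (e,e)
    · exact hnle (hTpq ▸ hTA3)
  · -- T is free of α
    have hu : u ∈ Kc r α u := Kc_self u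
    have hv : v ∈ Kc r α u := Or.inr ruv
    have hw : w ∈ Kc r α u := Or.inr ruw
    have trich2 : ∀ z ∉ Kc r α u, ∀ p ∈ Kc r α u, ∀ q ∈ Kc r α u, p ≠ q →
        (r z p = a ∧ r z q = a) ∨ (r z p = b ∧ r z q = b) := by
      intro z hz p hp q hq hpq
      obtain ⟨hzp, hzpα⟩ := Kc_out hsym htr hp hz
      obtain ⟨hzq, hzqα⟩ := Kc_out hsym htr hq hz
      have hm : ({r z p, r p q, r z q} : Multiset C) ∈ A3 r := tri_mem hzp hpq hzq
      rw [Kc_edge hsym htr hp hq hpq] at hm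
      rw [hA3] at hm
      simp only [Set.mem_insert_iff, Set.mem_singleton_iff] at hm
      rcases hm with h | h | h | h
      · exfalso
        apply hzpα
        have hmem : r z p ∈ ({α, α, α} : Multiset C) := h ▸ (by simp)
        simpa using hmem
      · rcases mid_alpha hzpα hzqα (Ne.symm hαa) (Ne.symm hαa) h with ⟨h1, h2⟩ | ⟨h1, h2⟩ <;>
          exact Or.inl ⟨h1, h2⟩
      · rcases mid_alpha hzpα hzqα (Ne.symm hαb) (Ne.symm hαb) h with ⟨h1, h2⟩ | ⟨h1, h2⟩ <;>
          exact Or.inr ⟨h1, h2⟩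
      · exact absurd (h ▸ (by simp : α ∈ ({r z p, α, r z q} : Multiset C))) hTα
    have step1 : ∀ z ∉ Kc r α u,
        (∀ p ∈ Kc r α u, r z p = a) ∨ (∀ p ∈ Kc r α u, r z p = b) := by
      intro z hz
      rcases trich2 z hz u hu v hv huv with ⟨h1, _⟩ | ⟨h1, _⟩
      · left
        intro p hp
        by_cases hpu : p = u
        · rw [hpu]; exact h1
        · rcases trich2 z hz p hp u hu hpu with ⟨h2, _⟩ | ⟨h2, h3⟩
          · exact h2
          · exact absurd (h3.symm.trans h1) (Ne.symm hab)
      · right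
        intro p hp
        by_cases hpu : p = u
        · rw [hpu]; exact h1
        · rcases trich2 z hz p hp u hu hpu with ⟨h2, h3⟩ | ⟨h2, _⟩
          · exact absurd (h3.symm.trans h1) hab
          · exact h2
    obtain ⟨x, z, hxz, he'⟩ := id hecol
    have hxK : x ∉ Kc r α u := by
      intro hxK
      have hzK : z ∉ Kc r α u :=
        fun hzK => hαe ((Kc_edge hsym htr hxK hzK hxz).symm.trans he')
      rcases step1 z hzK with hall | hall
      · have hval := hall x hxK
        rw [hsym] at hval
        exact (Ne.symm hae) (he'.symm.trans hval)
      · have hval := hall x hxK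
        rw [hsym] at hval
        exact (Ne.symm hbe) (he'.symm.trans hval)
    have hzK : z ∉ Kc r α u := by
      intro hzK
      rcases step1 x hxK with hall | hall
      · exact (Ne.symm hae) (he'.symm.trans (hall z hzK))
      · exact (Ne.symm hbe) (he'.symm.trans (hall z hzK))
    obtain ⟨hzu, _⟩ := Kc_out hsym htr hu hzK
    obtain ⟨hxu, _⟩ := Kc_out hsym htr hu hxK
    have hm : ({r x z, r z u, r x u} : Multiset C) ∈ A3 r := tri_mem hxz hzu hxu
    rcases step1 x hxK with hxall | hxall <;> rcases step1 z hzK with hzall | hzall <;>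
      rw [he', hzall u hu, hxall u hu, hA3] at hm <;>
      simp only [Set.mem_insert_iff, Set.mem_singleton_iff] at hm
    -- (a, a) : T = {e,a,a}
    · exfalso
      have hT : T = {e, a, a} := by
        rcases hm with h | h | h | h
        · exact (no_eq (c := e) h (by simp) (by simp [Ne.symm hαe])).elim
        · exact (no_eq (c := e) h (by simp) (by simp [Ne.symm hαe, Ne.symm hae])).elim
        · exact (no_eq (c := e) h (by simp) (by simp [Ne.symm hαe, Ne.symm hbe])).elim
        · exact h.symm
      have honly : ∀ m ∈ A3 r, b ∈ m → m = {α, b, b} := by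
        intro m hmm hbm
        rw [hA3] at hmm
        simp only [Set.mem_insert_iff, Set.mem_singleton_iff] at hmm
        rcases hmm with h | h | h | h
        · rw [h] at hbm; exact absurd hbm (by simp [Ne.symm hαb])
        · rw [h] at hbm; exact absurd hbm (by simp [Ne.symm hαb, hab, Ne.symm hab])
        · exact h
        · rw [h, hT] at hbm; exact absurd hbm (by simp [Ne.symm hαb, Ne.symm hab, hbe])
      rcases U1 hsym htr (Ne.symm hαb) (Ne.symm hαb) hbcol honly hecol with h' | h' | h' | h'
      · exact hαe h'.symm
      · exact hbe h'.symm
      · exact hbe h'.symm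
      · rw [hA3] at h'
        simp only [Set.mem_insert_iff, Set.mem_singleton_iff] at h'
        rcases h' with h | h | h | h
        · exact no_eq (c := e) h (by simp) (by simp [Ne.symm hαe])
        · exact no_eq (c := e) h (by simp) (by simp [Ne.symm hαe, Ne.symm hae])
        · exact no_eq (c := e) h (by simp) (by simp [Ne.symm hαe, Ne.symm hbe])
        · rw [hT] at h
          exact no_eq (c := α) h (by simp) (by simp [hαe, hαa])
    -- (a, b) : T = {e, b, a}  (r z u = b, r x u = a)
    · have hT : T = {e, b, a} := by
        rcases hm with h | h | h | h
        · exact (no_eq (c := e) h (by simp) (by simp [Ne.symm hαe])).elim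
        · exact (no_eq (c := e) h (by simp) (by simp [Ne.symm hαe, Ne.symm hae])).elim
        · exact (no_eq (c := e) h (by simp) (by simp [Ne.symm hαe, Ne.symm hbe])).elim
        · exact h.symm
      refine ⟨a, b, e, ⟨hαa, hαb, hαe, hab, hae, hbe⟩, hcim, Or.inr (Or.inl ?_)⟩
      rw [hA3, hT]
      rw [show ({b, b, α} : Multiset C) = {α, b, b} from rot3 b b α,
        show ({e, b, a} : Multiset C) = {a, b, e} from
          (rot3 e b a).trans (swap23_s9 a e b)]
    -- (b, a) : T = {e, a, b}
    · have hT : T = {e, a, b} := by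
        rcases hm with h | h | h | h
        · exact (no_eq (c := e) h (by simp) (by simp [Ne.symm hαe])).elim
        · exact (no_eq (c := e) h (by simp) (by simp [Ne.symm hαe, Ne.symm hae])).elim
        · exact (no_eq (c := e) h (by simp) (by simp [Ne.symm hαe, Ne.symm hbe])).elim
        · exact h.symm
      refine ⟨a, b, e, ⟨hαa, hαb, hαe, hab, hae, hbe⟩, hcim, Or.inr (Or.inl ?_)⟩
      rw [hA3, hT]
      rw [show ({b, b, α} : Multiset C) = {α, b, b} from rot3 b b α,
        show ({e, a, b} : Multiset C) = {a, b, e} from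
          (rot3 e a b).trans (rot3 b e a)]
    -- (b, b) : T = {e,b,b}
    · exfalso
      have hT : T = {e, b, b} := by
        rcases hm with h | h | h | h
        · exact (no_eq (c := e) h (by simp) (by simp [Ne.symm hαe])).elim
        · exact (no_eq (c := e) h (by simp) (by simp [Ne.symm hαe, Ne.symm hae])).elim
        · exact (no_eq (c := e) h (by simp) (by simp [Ne.symm hαe, Ne.symm hbe])).elim
        · exact h.symm
      have honly : ∀ m ∈ A3 r, a ∈ m → m = {α, a, a} := by
        intro m hmm ham
        rw [hA3] at hmm
        simp only [Set.mem_insert_iff, Set.mem_singleton_iff] at hmm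
        rcases hmm with h | h | h | h
        · rw [h] at ham; exact absurd ham (by simp [Ne.symm hαa])
        · exact h
        · rw [h] at ham; exact absurd ham (by simp [Ne.symm hαa, hab])
        · rw [h, hT] at ham; exact absurd ham (by simp [Ne.symm hαa, hab, hae])
      rcases U1 hsym htr (Ne.symm hαa) (Ne.symm hαa) hacol honly hecol with h' | h' | h' | h'
      · exact hαe h'.symm
      · exact hae h'.symm
      · exact hae h'.symm
      · rw [hA3] at h'
        simp only [Set.mem_insert_iff, Set.mem_singleton_iff] at h'
        rcases h' with h | h | h | h
        · exact no_eq (c := e) h (by simp) (by simp [Ne.symm hαe])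
        · exact no_eq (c := e) h (by simp) (by simp [Ne.symm hαe, Ne.symm hae])
        · exact no_eq (c := e) h (by simp) (by simp [Ne.symm hαe, Ne.symm hbe])
        · rw [hT] at h
          exact no_eq (c := α) h (by simp) (by simp [hαe, hαb])

end

section
variable {X C : Type*} {r : X → X → C} {α : C}
variable (hsym : ∀ x y, r x y = r y x)
variable (htr : ∀ p q s : X, p ≠ s → r p q = α → r q s = α → r p s = α)
variable (htwo : ∀ c : C, ({α, α, c} : Multiset C) ∈ A3 r → c = α)

set_option maxHeartbeats 1000000 in
include hsym htr htwo in
lemma caseL1mf {a b e : C}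
    (hαa : α ≠ a) (hαb : α ≠ b) (hαe : α ≠ e) (hab : a ≠ b) (hae : a ≠ e) (hbe : b ≠ e)
    (hcim : colorIm r = {α, a, b, e})
    {u v w : X} (huv : u ≠ v) (hvw : v ≠ w) (huw : u ≠ w)
    (ruv : r u v = α) (rvw : r v w = α) (ruw : r u w = α)
    {Tm Tf : Multiset C}
    (hA3 : A3 r = {({α, α, α} : Multiset C), {α, a, a}, Tm, Tf})
    (hmα : α ∈ Tm) (hfα : α ∉ Tf)
    (hmA : Tm ≠ ({α, α, α} : Multiset C)) (hmL : Tm ≠ {α, a, a})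
    (hnlb : ({α, b, b} : Multiset C) ∉ A3 r)
    (hnle : ({α, e, e} : Multiset C) ∉ A3 r) : False := by
  have hTA3 : Tm ∈ A3 r := by rw [hA3]; simp
  have hbcol : b ∈ colorIm r := by rw [hcim]; simp
  have hecol : e ∈ colorIm r := by rw [hcim]; simp
  obtain ⟨p, q, hpα, hqα, hpc, hqc, hTpq⟩ := mixed_shape htwo hTA3 hmα hmA
  have hpm : p = a ∨ p = b ∨ p = e := by
    have h' := hpc
    rw [hcim] at h'
    simp only [Set.mem_insert_iff, Set.mem_singleton_iff] at h'
    rcases h' with h' | h' | h' | h'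
    · exact absurd h' hpα
    · exact Or.inl h'
    · exact Or.inr (Or.inl h')
    · exact Or.inr (Or.inr h')
  have hqm : q = a ∨ q = b ∨ q = e := by
    have h' := hqc
    rw [hcim] at h'
    simp only [Set.mem_insert_iff, Set.mem_singleton_iff] at h'
    rcases h' with h' | h' | h' | h'
    · exact absurd h' hqα
    · exact Or.inl h'
    · exact Or.inr (Or.inl h')
    · exact Or.inr (Or.inr h')
  have hcim' : colorIm r = {α, a, e, b} := by
    rw [hcim]; ext c; simp only [Set.mem_insert_iff, Set.mem_singleton_iff]; tauto
  rcases hpm with hp | hp | hp <;> rcases hqm with hq | hq | hq <;> rw [hp, hq] at hTpq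
  · exact hmL hTpq
  · -- (a,b) : U4
    exact U4 hsym htr hαa hαb hαe hab hae hbe hcim huv hvw huw ruv rvw ruw
      (by rw [hA3, hTpq]) hfα
  · -- (a,e) : U4 with b ↔ e
    exact U4 hsym htr hαa hαe hαb hae hab (Ne.symm hbe) hcim' huv hvw huw ruv rvw ruw
      (by rw [hA3, hTpq]) hfα
  · -- (b,a)
    exact U4 hsym htr hαa hαb hαe hab hae hbe hcim huv hvw huw ruv rvw ruw
      (by rw [hA3, hTpq, swap23_s9 α b a]) hfα
  · -- (b,b)
    exact hnlb (hTpq ▸ hTA3)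
  · -- (b,e) : U3
    exact U3 hsym htr hαa hαb hαe hab hae hbe hbcol hecol huv hvw huw ruv rvw ruw
      (by rw [hA3, hTpq]) hfα
  · -- (e,a)
    exact U4 hsym htr hαa hαe hαb hae hab (Ne.symm hbe) hcim' huv hvw huw ruv rvw ruw
      (by rw [hA3, hTpq, swap23_s9 α e a]) hfα
  · -- (e,b)
    exact U3 hsym htr hαa hαb hαe hab hae hbe hbcol hecol huv hvw huw ruv rvw ruw
      (by rw [hA3, hTpq, swap23_s9 α e b]) hfα
  · -- (e,e)
    exact hnle (hTpq ▸ hTA3)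

end

section
variable {X C : Type*} {r : X → X → C} {α : C}
variable (hsym : ∀ x y, r x y = r y x)
variable (htr : ∀ p q s : X, p ≠ s → r p q = α → r q s = α → r p s = α)
variable (htwo : ∀ c : C, ({α, α, c} : Multiset C) ∈ A3 r → c = α)

set_option maxHeartbeats 1600000 in
include hsym htr htwo in
lemma caseL1 [Fintype X] {a b e : C}
    (hαa : α ≠ a) (hαb : α ≠ b) (hαe : α ≠ e) (hab : a ≠ b) (hae : a ≠ e) (hbe : b ≠ e)
    (hcim : colorIm r = {α, a, b, e})
    {u v w : X} (huv : u ≠ v) (hvw : v ≠ w) (huw : u ≠ w)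
    (ruv : r u v = α) (rvw : r v w = α) (ruw : r u w = α)
    {T₁ T₂ : Multiset C}
    (hA3 : A3 r = {({α, α, α} : Multiset C), {α, a, a}, T₁, T₂})
    (h12 : T₁ ≠ T₂) (h1A : T₁ ≠ ({α, α, α} : Multiset C)) (h2A : T₂ ≠ ({α, α, α} : Multiset C))
    (h1L : T₁ ≠ {α, a, a}) (h2L : T₂ ≠ {α, a, a})
    (hnlb : ({α, b, b} : Multiset C) ∉ A3 r)
    (hnle : ({α, e, e} : Multiset C) ∉ A3 r) : Concl r α := by
  have h1A3 : T₁ ∈ A3 r := by rw [hA3]; simp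
  have h2A3 : T₂ ∈ A3 r := by rw [hA3]; simp
  have hbcol : b ∈ colorIm r := by rw [hcim]; simp
  have hecol : e ∈ colorIm r := by rw [hcim]; simp
  by_cases hα1 : α ∈ T₁ <;> by_cases hα2 : α ∈ T₂
  · -- both mixed
    have hcan : ∀ T : Multiset C, T ∈ A3 r → α ∈ T → T ≠ {α, α, α} → T ≠ {α, a, a} →
        T = {α, a, b} ∨ T = {α, a, e} ∨ T = {α, b, e} := by
      intro T hTA3 hTα hTA hTL
      obtain ⟨p, q, hpα, hqα, hpc, hqc, hTpq⟩ := mixed_shape htwo hTA3 hTα hTA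
      have hpm : p = a ∨ p = b ∨ p = e := by
        have h' := hpc
        rw [hcim] at h'
        simp only [Set.mem_insert_iff, Set.mem_singleton_iff] at h'
        rcases h' with h' | h' | h' | h'
        · exact absurd h' hpα
        · exact Or.inl h'
        · exact Or.inr (Or.inl h')
        · exact Or.inr (Or.inr h')
      have hqm : q = a ∨ q = b ∨ q = e := by
        have h' := hqc
        rw [hcim] at h'
        simp only [Set.mem_insert_iff, Set.mem_singleton_iff] at h'
        rcases h' with h' | h' | h' | h'
        · exact absurd h' hqα
        · exact Or.inl h'
        · exact Or.inr (Or.inl h')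
        · exact Or.inr (Or.inr h')
      rcases hpm with hp | hp | hp <;> rcases hqm with hq | hq | hq <;> rw [hp, hq] at hTpq
      · exact absurd hTpq hTL
      · exact Or.inl hTpq
      · exact Or.inr (Or.inl hTpq)
      · exact Or.inl (hTpq.trans (swap23_s9 α b a))
      · exact absurd (hTpq ▸ hTA3) hnlb
      · exact Or.inr (Or.inr hTpq)
      · exact Or.inr (Or.inl (hTpq.trans (swap23_s9 α e a)))
      · exact Or.inr (Or.inr (hTpq.trans (swap23_s9 α e b)))
      · exact absurd (hTpq ▸ hTA3) hnle
    have killbe : ∀ S1 S2 : Multiset C, A3 r = {({α, α, α} : Multiset C), {α, a, a}, S1, S2} →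
        S1 = {α, a, b} ∨ S1 = {α, a, e} → S2 = {α, b, e} → False := by
      intro S1 S2 hA3' hS1 hS2
      rcases hS1 with hS1 | hS1
      · -- {α,a,b} and {α,b,e} : c = e, d = b
        have honly : ∀ m ∈ A3 r, e ∈ m → m = {α, e, b} := by
          intro m hm hem
          rw [hA3'] at hm
          simp only [Set.mem_insert_iff, Set.mem_singleton_iff] at hm
          rcases hm with h | h | h | h
          · rw [h] at hem; exact absurd hem (by simp [Ne.symm hαe])
          · rw [h] at hem; exact absurd hem (by simp [Ne.symm hαe, Ne.symm hae])
          · rw [h, hS1] at hem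
            exact absurd hem (by simp [Ne.symm hαe, Ne.symm hae, Ne.symm hbe])
          · rw [h, hS2]; exact swap23_s9 α b e
        exact U2 hsym htr (Ne.symm hαe) (Ne.symm hαb) hecol honly hnlb
          huv hvw huw ruv rvw ruw
      · -- {α,a,e} and {α,b,e} : c = b, d = e
        have honly : ∀ m ∈ A3 r, b ∈ m → m = {α, b, e} := by
          intro m hm hbm
          rw [hA3'] at hm
          simp only [Set.mem_insert_iff, Set.mem_singleton_iff] at hm
          rcases hm with h | h | h | h
          · rw [h] at hbm; exact absurd hbm (by simp [Ne.symm hαb])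
          · rw [h] at hbm; exact absurd hbm (by simp [Ne.symm hαb, Ne.symm hab])
          · rw [h, hS1] at hbm
            exact absurd hbm (by simp [Ne.symm hαb, Ne.symm hab, hbe])
          · rw [h, hS2]
        exact U2 hsym htr (Ne.symm hαb) (Ne.symm hαe) hbcol honly hnle
          huv hvw huw ruv rvw ruw
    have hA3sw : A3 r = {({α, α, α} : Multiset C), {α, a, a}, T₂, T₁} := by
      rw [hA3]; ext m; simp only [Set.mem_insert_iff, Set.mem_singleton_iff]; tauto
    rcases hcan T₁ h1A3 hα1 h1A h1L with h1 | h1 | h1 <;>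
      rcases hcan T₂ h2A3 hα2 h2A h2L with h2 | h2 | h2
    · exact absurd (h1.trans h2.symm) h12
    · -- success (iii)
      refine ⟨a, b, e, ⟨hαa, hαb, hαe, hab, hae, hbe⟩, hcim, Or.inr (Or.inr ?_)⟩
      rw [hA3, h1, h2]
    · exact (killbe T₁ T₂ hA3 (Or.inl h1) h2).elim
    · -- success (iii), reversed
      refine ⟨a, b, e, ⟨hαa, hαb, hαe, hab, hae, hbe⟩, hcim, Or.inr (Or.inr ?_)⟩
      rw [hA3, h1, h2]
      ext m; simp only [Set.mem_insert_iff, Set.mem_singleton_iff]; tauto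
    · exact absurd (h1.trans h2.symm) h12
    · exact (killbe T₁ T₂ hA3 (Or.inr h1) h2).elim
    · exact (killbe T₂ T₁ hA3sw (Or.inl h2) h1).elim
    · exact (killbe T₂ T₁ hA3sw (Or.inr h2) h1).elim
    · exact absurd (h1.trans h2.symm) h12
  · -- T₁ mixed, T₂ free
    exact (caseL1mf hsym htr htwo hαa hαb hαe hab hae hbe hcim huv hvw huw ruv rvw ruw
      hA3 hα1 hα2 h1A h1L hnlb hnle).elim
  · -- T₂ mixed, T₁ free
    have hA3sw : A3 r = {({α, α, α} : Multiset C), {α, a, a}, T₂, T₁} := by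
      rw [hA3]; ext m; simp only [Set.mem_insert_iff, Set.mem_singleton_iff]; tauto
    exact (caseL1mf hsym htr htwo hαa hαb hαe hab hae hbe hcim huv hvw huw ruv rvw ruw
      hA3sw hα2 hα1 h2A h2L hnlb hnle).elim
  · -- both free
    exfalso
    have hu : u ∈ Kc r α u := Kc_self u
    have hv : v ∈ Kc r α u := Or.inr ruv
    have hw : w ∈ Kc r α u := Or.inr ruw
    have pairKa : ∀ z ∉ Kc r α u, ∀ p ∈ Kc r α u, r z p = a := by
      intro z hz p hp
      obtain ⟨q, hqK, hpq⟩ : ∃ q, q ∈ Kc r α u ∧ p ≠ q := by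
        by_cases hpu : p = u
        · exact ⟨v, hv, by rw [hpu]; exact huv⟩
        · exact ⟨u, hu, hpu⟩
      obtain ⟨hzp, hzpα⟩ := Kc_out hsym htr hp hz
      obtain ⟨hzq, hzqα⟩ := Kc_out hsym htr hqK hz
      have hm : ({r z p, r p q, r z q} : Multiset C) ∈ A3 r := tri_mem hzp hpq hzq
      rw [Kc_edge hsym htr hp hqK hpq, hA3] at hm
      simp only [Set.mem_insert_iff, Set.mem_singleton_iff] at hm
      rcases hm with h | h | h | h
      · exfalso
        apply hzpα
        have hmem : r z p ∈ ({α, α, α} : Multiset C) := h ▸ (by simp)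
        simpa using hmem
      · rcases mid_alpha hzpα hzqα (Ne.symm hαa) (Ne.symm hαa) h with ⟨h1, _⟩ | ⟨h1, _⟩ <;>
          exact h1
      · exact absurd (h ▸ (by simp : α ∈ ({r z p, α, r z q} : Multiset C))) hα1
      · exact absurd (h ▸ (by simp : α ∈ ({r z p, α, r z q} : Multiset C))) hα2
    have edge_out : ∀ {x z : X}, x ≠ z → r x z ≠ a → r x z ≠ α → x ∉ Kc r α u := by
      intro x z hxz hra hrα hxK
      have hzK : z ∉ Kc r α u := fun hzK => hrα (Kc_edge hsym htr hxK hzK hxz)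
      have hval := pairKa z hzK x hxK
      rw [hsym] at hval
      exact hra hval
    obtain ⟨x, z, hxz, hb'⟩ := id hbcol
    have hxK : x ∉ Kc r α u :=
      edge_out hxz (by rw [hb']; exact Ne.symm hab) (by rw [hb']; exact Ne.symm hαb)
    have hzK : z ∉ Kc r α u :=
      edge_out (Ne.symm hxz) (by rw [hsym, hb']; exact Ne.symm hab)
        (by rw [hsym, hb']; exact Ne.symm hαb)
    obtain ⟨x', z', hxz', he'⟩ := id hecol
    have hx'K : x' ∉ Kc r α u :=
      edge_out hxz' (by rw [he']; exact Ne.symm hae) (by rw [he']; exact Ne.symm hαe)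
    have hz'K : z' ∉ Kc r α u :=
      edge_out (Ne.symm hxz') (by rw [hsym, he']; exact Ne.symm hae)
        (by rw [hsym, he']; exact Ne.symm hαe)
    obtain ⟨hzu, _⟩ := Kc_out hsym htr hu hzK
    obtain ⟨hxu, _⟩ := Kc_out hsym htr hu hxK
    obtain ⟨hz'u, _⟩ := Kc_out hsym htr hu hz'K
    obtain ⟨hx'u, _⟩ := Kc_out hsym htr hu hx'K
    have hmb : ({r x z, r z u, r x u} : Multiset C) ∈ A3 r := tri_mem hxz hzu hxu
    rw [hb', pairKa z hzK u hu, pairKa x hxK u hu, hA3] at hmb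
    simp only [Set.mem_insert_iff, Set.mem_singleton_iff] at hmb
    have hTb : T₁ = {b, a, a} ∨ T₂ = {b, a, a} := by
      rcases hmb with h | h | h | h
      · exact (no_eq (c := b) h (by simp) (by simp [Ne.symm hαb])).elim
      · exact (no_eq (c := b) h (by simp) (by simp [Ne.symm hαb, Ne.symm hab])).elim
      · exact Or.inl h.symm
      · exact Or.inr h.symm
    have hme : ({r x' z', r z' u, r x' u} : Multiset C) ∈ A3 r := tri_mem hxz' hz'u hx'u
    rw [he', pairKa z' hz'K u hu, pairKa x' hx'K u hu, hA3] at hme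
    simp only [Set.mem_insert_iff, Set.mem_singleton_iff] at hme
    have hTe : T₁ = {e, a, a} ∨ T₂ = {e, a, a} := by
      rcases hme with h | h | h | h
      · exact (no_eq (c := e) h (by simp) (by simp [Ne.symm hαe])).elim
      · exact (no_eq (c := e) h (by simp) (by simp [Ne.symm hαe, Ne.symm hae])).elim
      · exact Or.inl h.symm
      · exact Or.inr h.symm
    have hA3' : A3 r = {({α, α, α} : Multiset C), {α, a, a}, {b, a, a}, {e, a, a}} := by
      rcases hTb with hb1 | hb1 <;> rcases hTe with he1 | he1
      · exact absurd (hb1.symm.trans he1)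
          (fun h => (no_eq (c := b) h (by simp) (by simp [Ne.symm hab, hbe])))
      · rw [hA3, hb1, he1]
      · rw [hA3, hb1, he1, Set.pair_comm ({e, a, a} : Multiset C) {b, a, a}]
      · exact absurd (hb1.symm.trans he1)
          (fun h => (no_eq (c := b) h (by simp) (by simp [Ne.symm hab, hbe])))
    have bprop : ∀ t, t ≠ x → t ≠ z → r x t = a ∧ r z t = a := by
      intro t htx htz
      have hm : ({r x z, r z t, r x t} : Multiset C) ∈ A3 r :=
        tri_mem hxz (fun h => htz h.symm) (fun h => htx h.symm)
      rw [hb', hA3'] at hm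
      simp only [Set.mem_insert_iff, Set.mem_singleton_iff] at hm
      rcases hm with h | h | h | h
      · exact (no_eq (c := b) h (by simp) (by simp [Ne.symm hαb])).elim
      · exact (no_eq (c := b) h (by simp) (by simp [Ne.symm hαb, Ne.symm hab])).elim
      · have hpq := pair_eq ((Multiset.cons_inj_right b).mp h)
        rcases hpq with ⟨hh1, hh2⟩ | ⟨hh1, hh2⟩ <;> exact ⟨hh2, hh1⟩
      · exact (no_eq (c := b) h (by simp) (by simp [hbe, Ne.symm hab])).elim
    have eprop : ∀ t, t ≠ x' → t ≠ z' → r x' t = a ∧ r z' t = a := by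
      intro t htx htz
      have hm : ({r x' z', r z' t, r x' t} : Multiset C) ∈ A3 r :=
        tri_mem hxz' (fun h => htz h.symm) (fun h => htx h.symm)
      rw [he', hA3'] at hm
      simp only [Set.mem_insert_iff, Set.mem_singleton_iff] at hm
      rcases hm with h | h | h | h
      · exact (no_eq (c := e) h (by simp) (by simp [Ne.symm hαe])).elim
      · exact (no_eq (c := e) h (by simp) (by simp [Ne.symm hαe, Ne.symm hae])).elim
      · exact (no_eq (c := e) h (by simp) (by simp [Ne.symm hbe, Ne.symm hae])).elim
      · have hpq := pair_eq ((Multiset.cons_inj_right e).mp h)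
        rcases hpq with ⟨hh1, hh2⟩ | ⟨hh1, hh2⟩ <;> exact ⟨hh2, hh1⟩
    have hx'x : x' ≠ x := by
      intro h
      by_cases hz'z : z' = z
      · rw [h, hz'z] at he'
        exact hbe (hb'.symm.trans he')
      · have hz'x : z' ≠ x := h ▸ (Ne.symm hxz')
        have hp := (bprop z' hz'x hz'z).1
        rw [← h] at hp
        exact (Ne.symm hae) (he'.symm.trans hp)
    have hx'z : x' ≠ z := by
      intro h
      by_cases hz'x : z' = x
      · rw [h, hz'x, hsym] at he'
        exact hbe (hb'.symm.trans he')
      · have hz'z : z' ≠ z := h ▸ (Ne.symm hxz')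
        have hp := (bprop z' hz'x hz'z).2
        rw [← h] at hp
        exact (Ne.symm hae) (he'.symm.trans hp)
    have hm : ({r x x', r x' u, r x u} : Multiset C) ∈ A3 r :=
      tri_mem (Ne.symm hx'x) hx'u hxu
    rw [(bprop x' hx'x hx'z).1, (eprop u (Ne.symm hx'u) (Ne.symm hz'u)).1,
      pairKa x hxK u hu, hA3'] at hm
    simp only [Set.mem_insert_iff, Set.mem_singleton_iff] at hm
    rcases hm with h | h | h | h
    · exact no_eq (c := a) h (by simp) (by simp [Ne.symm hαa])
    · exact no_eq (c := α) h.symm (by simp) (by simp [hαa])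
    · exact no_eq (c := b) h.symm (by simp) (by simp [Ne.symm hab])
    · exact no_eq (c := e) h.symm (by simp) (by simp [Ne.symm hae])

end

section
variable {X C : Type*} {r : X → X → C} {α : C}
variable (hsym : ∀ x y, r x y = r y x)
variable (htr : ∀ p q s : X, p ≠ s → r p q = α → r q s = α → r p s = α)

include hsym htr in
lemma caseL3 {a b e : C}
    (hαa : α ≠ a) (hαb : α ≠ b) (hαe : α ≠ e) (hab : a ≠ b) (hae : a ≠ e) (hbe : b ≠ e)
    (hcim : colorIm r = {α, a, b, e})
    (hA3 : A3 r = {({α, α, α} : Multiset C), {α, a, a}, {α, b, b}, {α, e, e}}) : False := by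
  have hacol : a ∈ colorIm r := by rw [hcim]; simp
  have hbcol : b ∈ colorIm r := by rw [hcim]; simp
  have honly : ∀ m ∈ A3 r, a ∈ m → m = {α, a, a} := by
    intro m hm ham
    rw [hA3] at hm
    simp only [Set.mem_insert_iff, Set.mem_singleton_iff] at hm
    rcases hm with h | h | h | h
    · rw [h] at ham; exact absurd ham (by simp [Ne.symm hαa])
    · exact h
    · rw [h] at ham; exact absurd ham (by simp [Ne.symm hαa, hab])
    · rw [h] at ham; exact absurd ham (by simp [Ne.symm hαa, hae])
  rcases U1 hsym htr (Ne.symm hαa) (Ne.symm hαa) hacol honly hbcol with h' | h' | h' | h'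
  · exact hαb h'.symm
  · exact hab h'.symm
  · exact hab h'.symm
  · rw [hA3] at h'
    simp only [Set.mem_insert_iff, Set.mem_singleton_iff] at h'
    rcases h' with h | h | h | h
    · exact no_eq (c := b) h (by simp) (by simp [Ne.symm hαb])
    · exact no_eq (c := b) h (by simp) (by simp [Ne.symm hαb, Ne.symm hab])
    · exact no_eq (c := a) h (by simp) (by simp [Ne.symm hαa, hab])
    · exact no_eq (c := b) h (by simp) (by simp [Ne.symm hαb, hbe])

set_option maxHeartbeats 1600000 in
include hsym htr in
lemma caseL0 [Fintype X] {a b e : C}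
    (hαa : α ≠ a) (hαb : α ≠ b) (hαe : α ≠ e) (hab : a ≠ b) (hae : a ≠ e) (hbe : b ≠ e)
    (hcim : colorIm r = {α, a, b, e})
    (ha2 : (colorIm r).ncard = 4) (ha3 : (A3 r).ncard = 4)
    (hααα : ({α, α, α} : Multiset C) ∈ A3 r)
    {u v w : X} (huv : u ≠ v) (hvw : v ≠ w) (huw : u ≠ w)
    (ruv : r u v = α) (rvw : r v w = α) (ruw : r u w = α)
    (hnla : ({α, a, a} : Multiset C) ∉ A3 r)
    (hnlb : ({α, b, b} : Multiset C) ∉ A3 r)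
    (hnle : ({α, e, e} : Multiset C) ∉ A3 r) : Concl r α := by
  have noLoop : ∀ c : C, c ∈ colorIm r → c ≠ α → ({α, c, c} : Multiset C) ∉ A3 r := by
    intro c hc hcα h
    rw [hcim] at hc
    simp only [Set.mem_insert_iff, Set.mem_singleton_iff] at hc
    rcases hc with rfl | h' | h' | h'
    · exact hcα rfl
    · rw [h'] at h; exact hnla h
    · rw [h'] at h; exact hnlb h
    · rw [h'] at h; exact hnle h
  have hu : u ∈ Kc r α u := Kc_self u
  have hbcol : b ∈ colorIm r := by rw [hcim]; simp
  obtain ⟨x, y, hxy, hb'⟩ := id hbcol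
  have hnotboth : ¬(x ∈ Kc r α u ∧ y ∈ Kc r α u) := by
    rintro ⟨h1, h2⟩
    exact hαb ((Kc_edge hsym htr h1 h2 hxy).symm.trans hb')
  obtain ⟨z₀, hz₀⟩ : ∃ z, z ∉ Kc r α u := by
    rcases not_and_or.mp hnotboth with h | h
    · exact ⟨x, h⟩
    · exact ⟨y, h⟩
  have hvK : v ∈ Kc r α u := Or.inr ruv
  have hwK : w ∈ Kc r α u := Or.inr ruw
  obtain ⟨hz₀u, h1α⟩ := Kc_out hsym htr hu hz₀
  obtain ⟨hz₀v, h2α⟩ := Kc_out hsym htr hvK hz₀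
  obtain ⟨hz₀w, h3α⟩ := Kc_out hsym htr hwK hz₀
  have hc1 : r z₀ u ∈ colorIm r := edge_mem hz₀u
  have hc2 : r z₀ v ∈ colorIm r := edge_mem hz₀v
  have hc3 : r z₀ w ∈ colorIm r := edge_mem hz₀w
  have P12 : ({α, r z₀ u, r z₀ v} : Multiset C) ∈ A3 r := by
    have hm := tri_mem (r := r) hz₀u huv hz₀v
    rw [ruv, swap12_s9 (r z₀ u) α (r z₀ v)] at hm
    exact hm
  have P13 : ({α, r z₀ u, r z₀ w} : Multiset C) ∈ A3 r := by
    have hm := tri_mem (r := r) hz₀u huw hz₀w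
    rw [ruw, swap12_s9 (r z₀ u) α (r z₀ w)] at hm
    exact hm
  have P23 : ({α, r z₀ v, r z₀ w} : Multiset C) ∈ A3 r := by
    have hm := tri_mem (r := r) hz₀v hvw hz₀w
    rw [rvw, swap12_s9 (r z₀ v) α (r z₀ w)] at hm
    exact hm
  have h12 : r z₀ u ≠ r z₀ v := by
    intro h
    rw [← h] at P12
    exact noLoop (r z₀ u) hc1 h1α P12
  have h13 : r z₀ u ≠ r z₀ w := by
    intro h
    rw [← h] at P13
    exact noLoop (r z₀ u) hc1 h1α P13
  have h23 : r z₀ v ≠ r z₀ w := by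
    intro h
    rw [← h] at P23
    exact noLoop (r z₀ v) hc2 h2α P23
  have hd1 : ({α, α, α} : Multiset C) ≠ {α, r z₀ u, r z₀ v} :=
    fun h => no_eq (c := r z₀ u) h.symm (by simp) (by simp [h1α])
  have hd2 : ({α, α, α} : Multiset C) ≠ {α, r z₀ u, r z₀ w} :=
    fun h => no_eq (c := r z₀ u) h.symm (by simp) (by simp [h1α])
  have hd3 : ({α, α, α} : Multiset C) ≠ {α, r z₀ v, r z₀ w} :=
    fun h => no_eq (c := r z₀ v) h.symm (by simp) (by simp [h2α])
  have hd4 : ({α, r z₀ u, r z₀ v} : Multiset C) ≠ {α, r z₀ u, r z₀ w} :=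
    fun h => no_eq (c := r z₀ v) h (by simp) (by simp [h2α, Ne.symm h12, h23])
  have hd5 : ({α, r z₀ u, r z₀ v} : Multiset C) ≠ {α, r z₀ v, r z₀ w} :=
    fun h => no_eq (c := r z₀ u) h (by simp) (by simp [h1α, h12, h13])
  have hd6 : ({α, r z₀ u, r z₀ w} : Multiset C) ≠ {α, r z₀ v, r z₀ w} :=
    fun h => no_eq (c := r z₀ u) h (by simp) (by simp [h1α, h12, h13])
  have hA3eq : A3 r = {({α, α, α} : Multiset C), {α, r z₀ u, r z₀ v},
      {α, r z₀ u, r z₀ w}, {α, r z₀ v, r z₀ w}} :=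
    eq_of_four ha3 hααα P12 P13 P23 hd1 hd2 hd3 hd4 hd5 hd6
  have hαcol : α ∈ colorIm r := ⟨u, v, huv, ruv⟩
  have hcolim : colorIm r = {α, r z₀ u, r z₀ v, r z₀ w} :=
    eq_of_four ha2 hαcol hc1 hc2 hc3 (Ne.symm h1α) (Ne.symm h2α) (Ne.symm h3α) h12 h13 h23
  -- cardinality bound
  have KKeyα : ∀ s t : X, s ≠ t → r s t = b → ∀ p ∈ Kc r α s, r t p ≠ α ∧ p ≠ t := by
    intro s t hst hb'' p hp
    constructor
    · rcases hp with h | h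
      · rw [h, hsym, hb'']
        exact Ne.symm hαb
      · intro htp
        have hts : r t s = α := htr t p s (Ne.symm hst) htp (by rw [hsym]; exact h)
        rw [hsym] at hts
        exact hαb (hts.symm.trans hb'')
    · intro hpt
      rcases hp with h | h
      · exact hst (h.symm.trans hpt)
      · rw [hpt] at h
        exact hαb (h.symm.trans hb'')
  have size : ∀ s t : X, s ≠ t → r s t = b → (Kc r α s).ncard ≤ 3 := by
    intro s t hst hb''
    have hmap : ∀ p ∈ Kc r α s, r t p ∈ ({r z₀ u, r z₀ v, r z₀ w} : Set C) := by
      intro p hp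
      obtain ⟨htpα, hpt⟩ := KKeyα s t hst hb'' p hp
      have hmem : r t p ∈ colorIm r := edge_mem (Ne.symm hpt)
      rw [hcolim] at hmem
      simp only [Set.mem_insert_iff, Set.mem_singleton_iff] at hmem ⊢
      rcases hmem with h | h | h | h
      · exact absurd h htpα
      · exact Or.inl h
      · exact Or.inr (Or.inl h)
      · exact Or.inr (Or.inr h)
    have hinj : Set.InjOn (fun p => r t p) (Kc r α s) := by
      intro p hp p' hp' heq
      by_contra hne
      have hpp' : r p p' = α := Kc_edge hsym htr hp hp' hne
      obtain ⟨htpα, hpt⟩ := KKeyα s t hst hb'' p hp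
      obtain ⟨htp'α, hp't⟩ := KKeyα s t hst hb'' p' hp'
      have heq' : r t p = r t p' := heq
      have hm := tri_mem (r := r) (Ne.symm hpt) hne (Ne.symm hp't)
      rw [hpp', ← heq', swap12_s9 (r t p) α (r t p)] at hm
      exact noLoop (r t p) (edge_mem (Ne.symm hpt)) htpα hm
    have hfin : ({r z₀ u, r z₀ v, r z₀ w} : Set C).Finite :=
      ((Set.finite_singleton _).insert _).insert _
    have hle := Set.ncard_le_ncard_of_injOn (fun p => r t p) hmap hinj hfin
    have hb1 := Set.ncard_insert_le (r z₀ u) ({r z₀ v, r z₀ w} : Set C)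
    have hb2 := Set.ncard_insert_le (r z₀ v) ({r z₀ w} : Set C)
    have hb3 : ({r z₀ w} : Set C).ncard = 1 := Set.ncard_singleton _
    omega
  have cover : ∀ t : X, t ∈ Kc r α x ∨ t ∈ Kc r α y := by
    intro t
    by_contra hcon
    push_neg at hcon
    obtain ⟨h1, h2⟩ := hcon
    have h1x : t ≠ x := fun h => h1 (Or.inl h)
    have h1r : r x t ≠ α := fun h => h1 (Or.inr h)
    have h2y : t ≠ y := fun h => h2 (Or.inl h)
    have h2r : r y t ≠ α := fun h => h2 (Or.inr h)
    have hm := tri_mem (r := r) hxy (Ne.symm h2y) (Ne.symm h1x)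
    rw [hb', hA3eq] at hm
    simp only [Set.mem_insert_iff, Set.mem_singleton_iff] at hm
    have hαm : α ∈ ({b, r y t, r x t} : Multiset C) := by
      rcases hm with h | h | h | h <;> rw [h] <;> simp
    simp only [Multiset.insert_eq_cons, Multiset.mem_cons, Multiset.mem_singleton] at hαm
    rcases hαm with h | h | h
    · exact hαb h
    · exact h2r h.symm
    · exact h1r h.symm
  have hyx : r y x = b := by rw [hsym]; exact hb'
  have s1 := size x y hxy hb'
  have s2 := size y x (Ne.symm hxy) hyx
  have hcard : Fintype.card X ≤ 6 := by
    have hsub : (Set.univ : Set X) ⊆ Kc r α x ∪ Kc r α y := fun t _ => cover t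
    have e1 : Fintype.card X = (Set.univ : Set X).ncard := by
      rw [Set.ncard_univ, Nat.card_eq_fintype_card]
    have e2 : (Set.univ : Set X).ncard ≤ (Kc r α x ∪ Kc r α y).ncard :=
      Set.ncard_le_ncard hsub (Set.toFinite _)
    have e3 := Set.ncard_union_le (Kc r α x) (Kc r α y)
    omega
  refine ⟨r z₀ u, r z₀ v, r z₀ w,
    ⟨Ne.symm h1α, Ne.symm h2α, Ne.symm h3α, h12, h13, h23⟩, hcolim, Or.inl ⟨?_, hcard⟩⟩
  rw [hA3eq, Set.pair_comm ({α, r z₀ u, r z₀ w} : Multiset C) {α, r z₀ v, r z₀ w}]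

end

set_option maxHeartbeats 1600000 in
/-- Lemma `lem:n9`. -/
theorem lem_n9 {X C : Type*} [Fintype X] (r : X → X → C)
    (hsym : ∀ x y, r x y = r y x)
    (ha2 : a2 r = 4) (ha3 : a3 r = 4) (α : C)
    (hααα : ({α, α, α} : Multiset C) ∈ A3 r)
    (hclosed : IsClosedColors r {α}) :
    ∃ β γ δ : C, (α ≠ β ∧ α ≠ γ ∧ α ≠ δ ∧ β ≠ γ ∧ β ≠ δ ∧ γ ≠ δ) ∧
      colorIm r = {α, β, γ, δ} ∧
      ((A3 r = {({α, α, α} : Multiset C), ({α, β, γ} : Multiset C),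
          ({α, γ, δ} : Multiset C), ({α, β, δ} : Multiset C)} ∧ Fintype.card X ≤ 6) ∨
        A3 r = {({α, α, α} : Multiset C), ({α, β, β} : Multiset C),
          ({γ, γ, α} : Multiset C), ({β, γ, δ} : Multiset C)} ∨
        A3 r = {({α, α, α} : Multiset C), ({α, β, β} : Multiset C),
          ({α, β, γ} : Multiset C), ({α, β, δ} : Multiset C)}) := by
  have ha2' : (colorIm r).ncard = 4 := ha2
  have ha3' : (A3 r).ncard = 4 := ha3
  have htwo : ∀ c : C, ({α, α, c} : Multiset C) ∈ A3 r → c = α := by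
    intro c h
    have hres := hclosed α α c rfl rfl h
    simpa using hres
  have htr : ∀ p q s : X, p ≠ s → r p q = α → r q s = α → r p s = α := by
    intro p q s hps hpq hqs
    by_cases hqp : q = p
    · rw [← hqp]; exact hqs
    · by_cases hqs' : q = s
      · rw [hqs'] at hpq; exact hpq
      · have hm := tri_mem (r := r) (fun h => hqp h.symm) hqs' hps
        rw [hpq, hqs] at hm
        exact htwo (r p s) hm
  obtain ⟨u, v, w, huv, hvw, huw, heq⟩ := hααα
  have ruv : r u v = α := by
    have h : r u v ∈ ({α, α, α} : Multiset C) := by rw [heq]; simp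
    simpa using h
  have rvw : r v w = α := by
    have h : r v w ∈ ({α, α, α} : Multiset C) := by rw [heq]; simp
    simpa using h
  have ruw : r u w = α := by
    have h : r u w ∈ ({α, α, α} : Multiset C) := by rw [heq]; simp
    simpa using h
  have hααα' : ({α, α, α} : Multiset C) ∈ A3 r := by
    have hm := tri_mem (r := r) huv hvw huw
    rwa [ruv, rvw, ruw] at hm
  have hαcol : α ∈ colorIm r := ⟨u, v, huv, ruv⟩
  obtain ⟨a, b, e, hαa, hαb, hαe, hab, hae, hbe, hcim⟩ := four_of_ncard ha2' hαcol
  suffices hC : Concl r α by exact hC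
  have cim2 : colorIm r = {α, b, a, e} := by
    rw [hcim]; ext c; simp only [Set.mem_insert_iff, Set.mem_singleton_iff]; tauto
  have cim3 : colorIm r = {α, e, a, b} := by
    rw [hcim]; ext c; simp only [Set.mem_insert_iff, Set.mem_singleton_iff]; tauto
  have cim4 : colorIm r = {α, a, e, b} := by
    rw [hcim]; ext c; simp only [Set.mem_insert_iff, Set.mem_singleton_iff]; tauto
  have cim5 : colorIm r = {α, b, e, a} := by
    rw [hcim]; ext c; simp only [Set.mem_insert_iff, Set.mem_singleton_iff]; tauto
  have dAa : ({α, a, a} : Multiset C) ≠ {α, α, α} :=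
    fun h => no_eq (c := a) h (by simp) (by simp [Ne.symm hαa])
  have dAb : ({α, b, b} : Multiset C) ≠ {α, α, α} :=
    fun h => no_eq (c := b) h (by simp) (by simp [Ne.symm hαb])
  have dAe : ({α, e, e} : Multiset C) ≠ {α, α, α} :=
    fun h => no_eq (c := e) h (by simp) (by simp [Ne.symm hαe])
  have dab : ({α, a, a} : Multiset C) ≠ {α, b, b} :=
    fun h => no_eq (c := a) h (by simp) (by simp [Ne.symm hαa, hab])
  have dae : ({α, a, a} : Multiset C) ≠ {α, e, e} :=
    fun h => no_eq (c := a) h (by simp) (by simp [Ne.symm hαa, hae])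
  have dbe : ({α, b, b} : Multiset C) ≠ {α, e, e} :=
    fun h => no_eq (c := b) h (by simp) (by simp [Ne.symm hαb, hbe])
  obtain ⟨S1, S2, S3, hN1, hN2, hN3, h12', h13', h23', hA3s⟩ := four_of_ncard ha3' hααα'
  have resh1 : ∀ m1 : Multiset C, m1 ∈ A3 r → m1 ≠ {α, α, α} →
      ∃ T₁ T₂ : Multiset C, A3 r = {({α, α, α} : Multiset C), m1, T₁, T₂} ∧
        T₁ ≠ T₂ ∧ T₁ ≠ ({α, α, α} : Multiset C) ∧ T₂ ≠ ({α, α, α} : Multiset C) ∧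
        T₁ ≠ m1 ∧ T₂ ≠ m1 := by
    intro m1 hm hmA
    have hm' : m1 = S1 ∨ m1 = S2 ∨ m1 = S3 := by
      rw [hA3s] at hm
      simp only [Set.mem_insert_iff, Set.mem_singleton_iff] at hm
      rcases hm with h | h | h | h
      · exact absurd h hmA
      · exact Or.inl h
      · exact Or.inr (Or.inl h)
      · exact Or.inr (Or.inr h)
    rcases hm' with h | h | h
    · refine ⟨S2, S3, ?_, h23', Ne.symm hN2, Ne.symm hN3,
        by rw [h]; exact Ne.symm h12', by rw [h]; exact Ne.symm h13'⟩
      rw [hA3s, h]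
    · refine ⟨S1, S3, ?_, h13', Ne.symm hN1, Ne.symm hN3,
        by rw [h]; exact h12', by rw [h]; exact Ne.symm h23'⟩
      rw [hA3s, h, Set.insert_comm S1 S2 ({S3} : Set (Multiset C))]
    · refine ⟨S1, S2, ?_, h12', Ne.symm hN1, Ne.symm hN2,
        by rw [h]; exact h13', by rw [h]; exact h23'⟩
      rw [hA3s, h, Set.pair_comm S2 S3, Set.insert_comm S1 S3 ({S2} : Set (Multiset C))]
  have resh2 : ∀ m1 m2 : Multiset C, m1 ∈ A3 r → m2 ∈ A3 r → m1 ≠ m2 →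
      m1 ≠ {α, α, α} → m2 ≠ {α, α, α} →
      ∃ T : Multiset C, A3 r = {({α, α, α} : Multiset C), m1, m2, T} ∧
        T ≠ ({α, α, α} : Multiset C) ∧ T ≠ m1 ∧ T ≠ m2 := by
    intro m1 m2 hm1 hm2 hne hA hB
    obtain ⟨T₁, T₂, hset, hTT, hT1A, hT2A, hT1m, hT2m⟩ := resh1 m1 hm1 hA
    have hm2' : m2 = T₁ ∨ m2 = T₂ := by
      rw [hset] at hm2
      simp only [Set.mem_insert_iff, Set.mem_singleton_iff] at hm2
      rcases hm2 with h | h | h | h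
      · exact absurd h hB
      · exact absurd h.symm hne
      · exact Or.inl h
      · exact Or.inr h
    rcases hm2' with h | h
    · exact ⟨T₂, by rw [hset, h], hT2A, hT2m, by rw [h]; exact Ne.symm hTT⟩
    · refine ⟨T₁, ?_, hT1A, hT1m, by rw [h]; exact hTT⟩
      rw [hset, h, Set.pair_comm T₁ T₂]
  by_cases hLa : ({α, a, a} : Multiset C) ∈ A3 r <;>
    by_cases hLb : ({α, b, b} : Multiset C) ∈ A3 r <;>
    by_cases hLe : ({α, e, e} : Multiset C) ∈ A3 r
  · -- loops at a, b, e
    exfalso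
    have hA3eq := eq_of_four ha3' hααα' hLa hLb hLe (Ne.symm dAa) (Ne.symm dAb)
      (Ne.symm dAe) dab dae dbe
    exact caseL3 hsym htr hαa hαb hαe hab hae hbe hcim hA3eq
  · -- loops at a, b
    obtain ⟨T, hA3'', hT1, hT2, hT3⟩ := resh2 {α, a, a} {α, b, b} hLa hLb dab dAa dAb
    exact caseL2 hsym htr htwo hαa hαb hαe hab hae hbe hcim huv hvw huw ruv rvw ruw
      hA3'' hT1 hT2 hT3 hLe
  · -- loops at a, e
    obtain ⟨T, hA3'', hT1, hT2, hT3⟩ := resh2 {α, a, a} {α, e, e} hLa hLe dae dAa dAe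
    exact caseL2 hsym htr htwo hαa hαe hαb hae hab (Ne.symm hbe) cim4 huv hvw huw
      ruv rvw ruw hA3'' hT1 hT2 hT3 hLb
  · -- loop at a
    obtain ⟨T₁, T₂, hA3'', hTT, hT1A, hT2A, hT1m, hT2m⟩ := resh1 {α, a, a} hLa dAa
    exact caseL1 hsym htr htwo hαa hαb hαe hab hae hbe hcim huv hvw huw ruv rvw ruw
      hA3'' hTT hT1A hT2A hT1m hT2m hLb hLe
  · -- loops at b, e
    obtain ⟨T, hA3'', hT1, hT2, hT3⟩ := resh2 {α, b, b} {α, e, e} hLb hLe dbe dAb dAe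
    exact caseL2 hsym htr htwo hαb hαe hαa hbe (Ne.symm hab) (Ne.symm hae) cim5
      huv hvw huw ruv rvw ruw hA3'' hT1 hT2 hT3 hLa
  · -- loop at b
    obtain ⟨T₁, T₂, hA3'', hTT, hT1A, hT2A, hT1m, hT2m⟩ := resh1 {α, b, b} hLb dAb
    exact caseL1 hsym htr htwo hαb hαa hαe (Ne.symm hab) hbe hae cim2 huv hvw huw
      ruv rvw ruw hA3'' hTT hT1A hT2A hT1m hT2m hLa hLe
  · -- loop at e
    obtain ⟨T₁, T₂, hA3'', hTT, hT1A, hT2A, hT1m, hT2m⟩ := resh1 {α, e, e} hLe dAe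
    exact caseL1 hsym htr htwo hαe hαa hαb (Ne.symm hae) (Ne.symm hbe) hab cim3
      huv hvw huw ruv rvw ruw hA3'' hTT hT1A hT2A hT1m hT2m hLa hLb
  · -- no loops
    exact caseL0 hsym htr hαa hαb hαe hab hae hbe hcim ha2' ha3' hααα' huv hvw huw
      ruv rvw ruw hLa hLb hLe
end
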